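/- arXiv:2312.15876 — 6 statements merged into one kernel-verified Lean document; each statement's English description precedes it below -/
import Mathlib

section
/- There exists a constant C > 0, independent of τ and of the intervals J_1, J_2, such that for every point (ξ, η) ∈ ℝ² × ℝ, the sum over all pairs (μ, ν) ∈ 𝒩 × 𝒩 of the characteristic functions of the algebraic sum sets u_{μ,J_1} + u_{ν,J_2} satisfies ∑_{(μ,ν) ∈ 𝒩²} χ_{u_{μ,J_1} + u_{ν,J_2}}(ξ, η) ≤ C. (Here u_{μ,J_1} + u_{ν,J_2} = {(ξ,η) + (ξ',η') : (ξ,η) ∈ u_{μ,J_1}, (ξ',η') ∈ u_{ν,J_2}}.) -/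
open Set Pointwise

noncomputable def GammaSet (τ μ : ℝ) : Set ℂ :=
  {ξ : ℂ | ξ ≠ 0 ∧ μ * (Real.sqrt τ)⁻¹ ≤ ξ.arg ∧ ξ.arg < (μ + 1) * (Real.sqrt τ)⁻¹}

def calN (τ : ℝ) : Set ℤ :=
  {μ : ℤ | |(μ : ℝ)| ≤ Real.sqrt τ * (Real.pi / 8) - 1}

noncomputable def uSet (τ μ : ℝ) (J : Set ℝ) : Set (ℂ × ℝ) :=
  {p : ℂ × ℝ | |p.2 - ‖p.1‖| ≤ τ⁻¹ ∧ p.1 ∈ GammaSet τ μ ∧ ‖p.1‖ ∈ J}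

/-!
Write a point of `u_{μ,J₁} + u_{ν,J₂}` as `(a + b, h)` with `a ∈ Γ_μ`, `b ∈ Γ_ν` and `h` within
`2/τ` of `‖a‖ + ‖b‖`. Two decompositions `a + b = a' + b'` of the same point have moduli within
`δ = τ^{-1/2}` of each other and sums of moduli within `4δ²`. By the law of cosines
`‖a + b‖² = (‖a‖ + ‖b‖)² - 2‖a‖‖b‖(1 - cos d)`, `d = arg a - arg b`, this fixes `cos d` up to
`O(δ² + δ d²)`, hence `|d|` up to `O(δ)` because `1 - cos` is quadratic at `0`. The sign of `d`
is only known (up to `δ`) once the order of `μ` and `ν` is fixed, so the pairs with `ν ≤ μ` and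
those with `μ < ν` are treated separately. Then `d` is known up to `20δ`, and rotating `a + b`
back by `arg b` determines `arg b`, and so `arg a`, up to `100δ`: each family lies in a box of
side `201`.
-/

open Real
open Complex (I normSq)

theorem sub_mul_add_div_five_le_cos_sub_cos {a b : ℝ} (ha : 0 ≤ a) (hab : a ≤ b)
    (hb : b ≤ π / 2) : (b - a) * (b + a) / 5 ≤ cos a - cos b := by
  have hsum := mul_le_sin (x := (b + a) / 2) (by linarith) (by linarith)
  have hdiff := mul_le_sin (x := (b - a) / 2) (by linarith) (by linarith)
  have hpi : π < 3.15 := pi_lt_d2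
  have hfac : 2 * (2 / π * ((b + a) / 2) * (2 / π * ((b - a) / 2))) =
      (b - a) * (b + a) / (π ^ 2 / 2) := by
    field_simp
  have hπsq : (b - a) * (b + a) / 5 ≤ (b - a) * (b + a) / (π ^ 2 / 2) :=
    div_le_div_of_nonneg_left (by nlinarith) (by positivity) (by nlinarith [pi_pos])
  rw [cos_sub_cos, show (a - b) / 2 = -((b - a) / 2) by ring, sin_neg,
    show (a + b) / 2 = (b + a) / 2 by ring]
  nlinarith [mul_le_mul hsum hdiff (by positivity) (sin_nonneg_of_nonneg_of_le_pi
    (by linarith) (by linarith))]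

theorem sub_le_of_cos_sub_cos_le {a b δ : ℝ} (ha : 0 ≤ a) (hab : a ≤ b) (hb : b ≤ π / 4)
    (hδ : 0 ≤ δ) (h : cos a - cos b ≤ 16 * δ ^ 2 + 2 * δ * b ^ 2) : b - a ≤ 16 * δ := by
  by_contra! hgap
  have hpi : π < 3.15 := pi_lt_d2
  have hlow := sub_mul_add_div_five_le_cos_sub_cos ha hab (by linarith)
  have hb2 : 2 * δ * b ^ 2 ≤ 1.6 * δ * (b + a) := by nlinarith [mul_nonneg hδ ha]
  nlinarith [mul_le_mul_of_nonneg_left hgap.le (by linarith : (0 : ℝ) ≤ b + a)]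

theorem abs_sub_le_of_law_of_cosines {δ r₁ r₂ s₁ s₂ c c' : ℝ}
    (hr₁ : r₁ ∈ Icc 1 2) (hr₂ : r₂ ∈ Icc 1 2) (hs₁ : s₁ ∈ Icc 1 2) (hs₂ : s₂ ∈ Icc 1 2)
    (h₁ : |r₁ - s₁| ≤ δ) (h₂ : |r₂ - s₂| ≤ δ) (hsum : |(r₁ + r₂) - (s₁ + s₂)| ≤ 4 * δ ^ 2)
    (hc' : c' ≤ 1) (h : r₁ ^ 2 + r₂ ^ 2 + 2 * r₁ * r₂ * c = s₁ ^ 2 + s₂ ^ 2 + 2 * s₁ * s₂ * c') :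
    |c - c'| ≤ 16 * δ ^ 2 + 4 * δ * (1 - c') := by
  obtain ⟨hr₁l, hr₁u⟩ := hr₁
  obtain ⟨hr₂l, hr₂u⟩ := hr₂
  obtain ⟨hs₁l, hs₁u⟩ := hs₁
  obtain ⟨hs₂l, hs₂u⟩ := hs₂
  -- The two sides of `h` are `(r₁ + r₂)² - 2 r₁ r₂ (1 - c)` and `(s₁ + s₂)² - 2 s₁ s₂ (1 - c')`.
  have hdefect : r₁ * r₂ * (c' - c) =
      ((r₁ + r₂) ^ 2 - (s₁ + s₂) ^ 2) / 2 + (s₁ * s₂ - r₁ * r₂) * (1 - c') := by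
    linear_combination (-1 / 2) * h
  have hsq : |((r₁ + r₂) ^ 2 - (s₁ + s₂) ^ 2) / 2| ≤ 16 * δ ^ 2 := by
    rw [sq_sub_sq, abs_div, abs_mul, abs_two,
      abs_of_nonneg (by linarith : 0 ≤ r₁ + r₂ + (s₁ + s₂))]
    nlinarith [abs_nonneg (r₁ + r₂ - (s₁ + s₂))]
  have hprod : |s₁ * s₂ - r₁ * r₂| ≤ 4 * δ := by
    rw [abs_le] at h₁ h₂ ⊢
    constructor <;> nlinarith
  have hmain : |r₁ * r₂ * (c' - c)| ≤ 16 * δ ^ 2 + 4 * δ * (1 - c') := by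
    rw [hdefect]
    refine (abs_add_le _ _).trans (add_le_add hsq ?_)
    rw [abs_mul, abs_of_nonneg (by linarith : 0 ≤ 1 - c')]
    exact mul_le_mul_of_nonneg_right hprod (by linarith)
  rw [abs_mul, abs_of_nonneg (by positivity), abs_sub_comm] at hmain
  nlinarith [abs_nonneg (c - c'), one_le_mul_of_one_le_of_one_le hr₁l hr₂l]

theorem normSq_add_eq_law_of_cosines (a b : ℂ) :
    normSq (a + b) = ‖a‖ ^ 2 + ‖b‖ ^ 2 + 2 * ‖a‖ * ‖b‖ * cos (a.arg - b.arg) := by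
  conv_lhs => rw [← Complex.norm_mul_exp_arg_mul_I a, ← Complex.norm_mul_exp_arg_mul_I b]
  simp only [Complex.normSq_apply, Complex.add_re, Complex.add_im, Complex.mul_re,
    Complex.mul_im, Complex.ofReal_re, Complex.ofReal_im, Complex.exp_ofReal_mul_I_re,
    Complex.exp_ofReal_mul_I_im, cos_sub]
  linear_combination ‖a‖ ^ 2 * sin_sq_add_cos_sq a.arg + ‖b‖ ^ 2 * sin_sq_add_cos_sq b.arg

theorem abs_sub_le_of_law_of_cosines_of_neg_le {δ r₁ r₂ s₁ s₂ d d' : ℝ}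
    (hr₁ : r₁ ∈ Icc 1 2) (hr₂ : r₂ ∈ Icc 1 2) (hs₁ : s₁ ∈ Icc 1 2) (hs₂ : s₂ ∈ Icc 1 2)
    (h₁ : |r₁ - s₁| ≤ δ) (h₂ : |r₂ - s₂| ≤ δ) (hsum : |(r₁ + r₂) - (s₁ + s₂)| ≤ 4 * δ ^ 2)
    (hd : |d| ≤ π / 4) (hd' : |d'| ≤ π / 4) (hdδ : -δ ≤ d) (hd'δ : -δ ≤ d')
    (h : r₁ ^ 2 + r₂ ^ 2 + 2 * r₁ * r₂ * cos d = s₁ ^ 2 + s₂ ^ 2 + 2 * s₁ * s₂ * cos d') :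
    |d - d'| ≤ 20 * δ := by
  wlog hle : |d| ≤ |d'| generalizing r₁ r₂ s₁ s₂ d d'
  · rw [abs_sub_comm]
    exact this hs₁ hs₂ hr₁ hr₂ (by rwa [abs_sub_comm]) (by rwa [abs_sub_comm])
      (by rwa [abs_sub_comm]) hd' hd hd'δ hdδ h.symm (le_of_not_ge hle)
  have hδ : 0 ≤ δ := (abs_nonneg _).trans h₁
  have hcos := abs_sub_le_of_law_of_cosines hr₁ hr₂ hs₁ hs₂ h₁ h₂ hsum (cos_le_one d') h
  have hcos' : cos |d| - cos |d'| ≤ 16 * δ ^ 2 + 2 * δ * |d'| ^ 2 := by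
    rw [cos_abs, cos_abs, sq_abs]
    nlinarith [le_abs_self (cos d - cos d'), one_sub_sq_div_two_le_cos (x := d')]
  have habs := sub_le_of_cos_sub_cos_le (abs_nonneg d) hle hd' hδ hcos'
  rw [abs_le]
  constructor <;> cases abs_cases d <;> cases abs_cases d' <;> linarith

theorem norm_exp_mul_I_sub_exp_mul_I_le (x y : ℝ) :
    ‖Complex.exp (x * I) - Complex.exp (y * I)‖ ≤ |x - y| := by
  have hfac : Complex.exp (x * I) - Complex.exp (y * I) =
      Complex.exp (y * I) * (Complex.exp (I * ↑(x - y)) - 1) := by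
    rw [mul_sub, mul_one, ← Complex.exp_add]
    push_cast
    ring_nf
  rw [hfac, norm_mul, Complex.norm_exp_ofReal_mul_I, one_mul]
  exact norm_exp_I_mul_ofReal_sub_one_le

theorem abs_sub_le_of_exp_mul_I_mul_eq {A A' : ℂ} {t t' ε : ℝ} (hA : 1 ≤ ‖A‖)
    (h : Complex.exp (t * I) * A = Complex.exp (t' * I) * A') (hε : ‖A - A'‖ ≤ ε)
    (ht : |t - t'| ≤ π) : |t - t'| ≤ π / 2 * ε := by
  have hrot : (Complex.exp (I * ↑(t - t')) - 1) * A = A' - A := by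
    refine mul_left_cancel₀ (Complex.exp_ne_zero (t' * I)) ?_
    rw [mul_sub, ← h, ← mul_assoc, mul_sub, mul_one, ← Complex.exp_add]
    push_cast
    ring_nf
  have hchord : ‖Complex.exp (I * ↑(t - t')) - 1‖ ≤ ε :=
    calc ‖Complex.exp (I * ↑(t - t')) - 1‖
        ≤ ‖Complex.exp (I * ↑(t - t')) - 1‖ * ‖A‖ := le_mul_of_one_le_right (norm_nonneg _) hA
      _ = ‖A - A'‖ := by rw [← norm_mul, hrot, norm_sub_rev]
      _ ≤ ε := hε
  rw [Complex.norm_exp_I_mul_ofReal_sub_one, norm_mul, Real.norm_eq_abs, Real.norm_eq_abs,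
    abs_two] at hchord
  have hsin := mul_abs_le_abs_sin (x := (t - t') / 2) (by rw [abs_div, abs_two]; linarith)
  rw [abs_div, abs_two] at hsin
  have hπ := pi_pos
  calc |t - t'| = π / 2 * (2 * (2 / π * (|t - t'| / 2))) := by field_simp
    _ ≤ π / 2 * ε := by gcongr; linarith

theorem add_eq_exp_arg_mul_I_mul (a b : ℂ) :
    a + b = Complex.exp (b.arg * I) * (‖a‖ * Complex.exp ((a.arg - b.arg : ℝ) * I) + ‖b‖) := by
  conv_lhs => rw [← Complex.norm_mul_exp_arg_mul_I a, ← Complex.norm_mul_exp_arg_mul_I b]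
  rw [mul_add, mul_left_comm, ← Complex.exp_add]
  push_cast
  ring_nf

theorem abs_arg_sub_arg_le_of_add_eq {δ : ℝ} {a b a' b' : ℂ}
    (ha : ‖a‖ ∈ Icc 1 2) (hb : ‖b‖ ∈ Icc 1 2) (ha' : ‖a'‖ ∈ Icc 1 2) (hb' : ‖b'‖ ∈ Icc 1 2)
    (h₁ : |‖a‖ - ‖a'‖| ≤ δ) (h₂ : |‖b‖ - ‖b'‖| ≤ δ)
    (hsum : |(‖a‖ + ‖b‖) - (‖a'‖ + ‖b'‖)| ≤ 4 * δ ^ 2)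
    (harg_a : |a.arg| ≤ π / 8) (harg_b : |b.arg| ≤ π / 8)
    (harg_a' : |a'.arg| ≤ π / 8) (harg_b' : |b'.arg| ≤ π / 8)
    (hd : -δ ≤ a.arg - b.arg) (hd' : -δ ≤ a'.arg - b'.arg) (h : a + b = a' + b') :
    |a.arg - a'.arg| ≤ 100 * δ ∧ |b.arg - b'.arg| ≤ 100 * δ := by
  have hπ : π < 3.1416 := pi_lt_d4
  rw [abs_le] at harg_a harg_b harg_a' harg_b'
  set d := a.arg - b.arg
  set d' := a'.arg - b'.arg
  have hdd : |d - d'| ≤ 20 * δ := by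
    have hcos := congrArg normSq h
    rw [normSq_add_eq_law_of_cosines, normSq_add_eq_law_of_cosines] at hcos
    exact abs_sub_le_of_law_of_cosines_of_neg_le ha hb ha' hb' h₁ h₂ hsum
      (by rw [abs_le]; constructor <;> linarith) (by rw [abs_le]; constructor <;> linarith)
      hd hd' hcos
  -- Both sums are rotations of `A = ‖a‖ e^{id} + ‖b‖`, resp. `A'`, by `arg b`, resp. `arg b'`.
  set A : ℂ := ‖a‖ * Complex.exp (d * I) + ‖b‖ with hA
  set A' : ℂ := ‖a'‖ * Complex.exp (d' * I) + ‖b'‖ with hA'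
  have hrot : Complex.exp (b.arg * I) * A = Complex.exp (b'.arg * I) * A' := by
    rw [← add_eq_exp_arg_mul_I_mul, ← add_eq_exp_arg_mul_I_mul, h]
  have hAnorm : 1 ≤ ‖A‖ := by
    have hre : A.re = ‖a‖ * cos d + ‖b‖ := by
      simp [hA, Complex.exp_ofReal_mul_I_re]
    have hcos : 0 ≤ cos d := cos_nonneg_of_mem_Icc ⟨by linarith, by linarith⟩
    have := Complex.re_le_norm A
    nlinarith [ha.1, hb.1]
  have hAA' : ‖A - A'‖ ≤ 42 * δ := by
    have hsplit : A - A' = (‖a‖ - ‖a'‖ : ℝ) * Complex.exp (d * I) +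
        ‖a'‖ * (Complex.exp (d * I) - Complex.exp (d' * I)) + (‖b‖ - ‖b'‖ : ℝ) := by
      rw [hA, hA']; push_cast; ring
    have hexp := norm_exp_mul_I_sub_exp_mul_I_le d d'
    rw [hsplit]
    refine (norm_add₃_le ..).trans ?_
    simp only [norm_mul, Complex.norm_exp_ofReal_mul_I, Complex.norm_real, Real.norm_eq_abs,
      mul_one, abs_norm]
    nlinarith [mul_le_mul ha'.2 (hexp.trans hdd) (norm_nonneg _) zero_le_two]
  have hb_close := abs_sub_le_of_exp_mul_I_mul_eq hAnorm hrot hAA'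
    (by rw [abs_le]; constructor <;> linarith)
  have hδ : 0 ≤ δ := (abs_nonneg _).trans h₁
  have hb_close' : |b.arg - b'.arg| ≤ 80 * δ := by nlinarith
  refine ⟨?_, by linarith⟩
  calc |a.arg - a'.arg| = |(b.arg - b'.arg) + (d - d')| := by simp only [d, d']; ring_nf
    _ ≤ |b.arg - b'.arg| + |d - d'| := abs_add_le _ _
    _ ≤ 100 * δ := by linarith

theorem Set.finite_and_ncard_le_of_abs_sub_le {T : Set (ℤ × ℤ)} {K : ℕ}
    (h : ∀ p ∈ T, ∀ q ∈ T, |p.1 - q.1| ≤ K ∧ |p.2 - q.2| ≤ K) :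
    T.Finite ∧ T.ncard ≤ (2 * K + 1) ^ 2 := by
  rcases T.eq_empty_or_nonempty with rfl | ⟨p, hp⟩
  · simp
  set box := Finset.Icc (p.1 - K) (p.1 + K) ×ˢ Finset.Icc (p.2 - K) (p.2 + K)
  have hbox : T ⊆ box := by
    intro q hq
    obtain ⟨h₁, h₂⟩ := h q hq p hp
    rw [abs_le] at h₁ h₂
    simp only [box, Finset.coe_product, Finset.coe_Icc, Set.mem_prod, Set.mem_Icc]
    omega
  refine ⟨box.finite_toSet.subset hbox, (Set.ncard_le_ncard hbox box.finite_toSet).trans ?_⟩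
  have hlen : ∀ c : ℤ, (c + K + 1 - (c - K)).toNat = 2 * K + 1 := fun c => by omega
  rw [Set.ncard_coe_finset, Finset.card_product, Int.card_Icc, Int.card_Icc, hlen, hlen, sq]

section Cone

variable {τ : ℝ}

theorem abs_arg_le_of_mem_GammaSet {μ : ℤ} {ξ : ℂ} (hτ : 0 < τ) (hμ : μ ∈ calN τ)
    (hξ : ξ ∈ GammaSet τ μ) : |ξ.arg| ≤ π / 8 := by
  obtain ⟨-, hlow, hupp⟩ := hξ
  have hμ' := abs_le.mp (show |(μ : ℝ)| ≤ √τ * (π / 8) - 1 from hμ)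
  have hδ0 : 0 < (√τ)⁻¹ := inv_pos.mpr (sqrt_pos.mpr hτ)
  have hedge : (√τ * (π / 8) - 1) * (√τ)⁻¹ = π / 8 - (√τ)⁻¹ := by
    field_simp [(sqrt_pos.mpr hτ).ne']
  have h₁ := mul_le_mul_of_nonneg_right hμ'.1 hδ0.le
  have h₂ := mul_le_mul_of_nonneg_right hμ'.2 hδ0.le
  rw [neg_mul, hedge] at h₁
  rw [hedge] at h₂
  rw [abs_le]
  constructor <;> linarith

theorem abs_sub_le_of_mem_GammaSet {μ μ' : ℤ} {ξ ξ' : ℂ} {K : ℕ} (hτ : 0 < τ)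
    (hξ : ξ ∈ GammaSet τ μ) (hξ' : ξ' ∈ GammaSet τ μ')
    (h : |ξ.arg - ξ'.arg| ≤ K * (√τ)⁻¹) : |μ - μ'| ≤ K := by
  obtain ⟨-, hlow, hupp⟩ := hξ
  obtain ⟨-, hlow', hupp'⟩ := hξ'
  have hδ0 : 0 < (√τ)⁻¹ := inv_pos.mpr (sqrt_pos.mpr hτ)
  rw [abs_le] at h ⊢
  have hlt : ((μ - μ' : ℤ) : ℝ) < K + 1 ∧ ((μ' - μ : ℤ) : ℝ) < K + 1 := by
    push_cast
    constructor <;>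
    · refine lt_of_mul_lt_mul_right ?_ hδ0.le
      linarith
  norm_cast at hlt
  omega

theorem neg_le_arg_sub_arg_of_mem_GammaSet {μ ν : ℤ} {ξ η : ℂ} (hνμ : ν ≤ μ)
    (hξ : ξ ∈ GammaSet τ μ) (hη : η ∈ GammaSet τ ν) : -(√τ)⁻¹ ≤ ξ.arg - η.arg := by
  obtain ⟨-, hlow, -⟩ := hξ
  obtain ⟨-, -, hupp⟩ := hη
  have : (ν : ℝ) * (√τ)⁻¹ ≤ μ * (√τ)⁻¹ := by gcongr
  linarith

theorem abs_sub_le_of_mem_uSet_add {α₁ β₁ α₂ β₂ : ℝ} {μ ν μ' ν' : ℤ} {x : ℂ × ℝ} (hτ : 0 < τ)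
    (hα₁ : 1 ≤ α₁) (hβ₁ : β₁ ≤ 2) (hJ₁ : β₁ - α₁ ≤ (√τ)⁻¹)
    (hα₂ : 1 ≤ α₂) (hβ₂ : β₂ ≤ 2) (hJ₂ : β₂ - α₂ ≤ (√τ)⁻¹)
    (hμ : μ ∈ calN τ) (hν : ν ∈ calN τ) (hμ' : μ' ∈ calN τ) (hν' : ν' ∈ calN τ)
    (hνμ : ν ≤ μ) (hνμ' : ν' ≤ μ')
    (hx : x ∈ uSet τ μ (Icc α₁ β₁) + uSet τ ν (Icc α₂ β₂))
    (hx' : x ∈ uSet τ μ' (Icc α₁ β₁) + uSet τ ν' (Icc α₂ β₂)) :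
    |μ - μ'| ≤ 100 ∧ |ν - ν'| ≤ 100 := by
  obtain ⟨p, ⟨hp, hpΓ, hpJ⟩, q, ⟨hq, hqΓ, hqJ⟩, rfl⟩ := hx
  obtain ⟨p', ⟨hp', hp'Γ, hp'J⟩, q', ⟨hq', hq'Γ, hq'J⟩, hsum⟩ := hx'
  have hτinv : τ⁻¹ = (√τ)⁻¹ ^ 2 := by rw [inv_pow, sq_sqrt hτ.le]
  have hIcc : ∀ {α β r : ℝ}, 1 ≤ α → β ≤ 2 → r ∈ Icc α β → r ∈ Icc 1 2 :=
    fun hα hβ hr => ⟨hα.trans hr.1, hr.2.trans hβ⟩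
  have hclose : ∀ {α β r s : ℝ}, β - α ≤ (√τ)⁻¹ → r ∈ Icc α β → s ∈ Icc α β →
      |r - s| ≤ (√τ)⁻¹ := fun hJ hr hs => by
    rw [abs_le]; constructor <;> linarith [hr.1, hr.2, hs.1, hs.2]
  have hheight : |(‖p.1‖ + ‖q.1‖) - (‖p'.1‖ + ‖q'.1‖)| ≤ 4 * (√τ)⁻¹ ^ 2 := by
    have h₂ := congrArg Prod.snd hsum
    simp only [Prod.snd_add] at h₂
    rw [hτinv, abs_le] at hp hq hp' hq'
    rw [abs_le]; constructor <;> linarith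
  obtain ⟨hμμ', hνν'⟩ := abs_arg_sub_arg_le_of_add_eq (hIcc hα₁ hβ₁ hpJ) (hIcc hα₂ hβ₂ hqJ)
    (hIcc hα₁ hβ₁ hp'J) (hIcc hα₂ hβ₂ hq'J) (hclose hJ₁ hpJ hp'J) (hclose hJ₂ hqJ hq'J) hheight
    (abs_arg_le_of_mem_GammaSet hτ hμ hpΓ) (abs_arg_le_of_mem_GammaSet hτ hν hqΓ)
    (abs_arg_le_of_mem_GammaSet hτ hμ' hp'Γ) (abs_arg_le_of_mem_GammaSet hτ hν' hq'Γ)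
    (neg_le_arg_sub_arg_of_mem_GammaSet hνμ hpΓ hqΓ)
    (neg_le_arg_sub_arg_of_mem_GammaSet hνμ' hp'Γ hq'Γ) (congrArg Prod.fst hsum).symm
  exact ⟨abs_sub_le_of_mem_GammaSet (K := 100) hτ hpΓ hp'Γ (mod_cast hμμ'),
    abs_sub_le_of_mem_GammaSet (K := 100) hτ hqΓ hq'Γ (mod_cast hνν')⟩

end Cone

theorem statement0 :
    ∃ C : ℕ, 0 < C ∧
      ∀ τ : ℝ, (10 : ℝ) ^ 6 < τ →
      ∀ α₁ β₁ α₂ β₂ : ℝ,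
        1 ≤ α₁ → α₁ ≤ β₁ → β₁ ≤ 2 → β₁ - α₁ ≤ (Real.sqrt τ)⁻¹ →
        1 ≤ α₂ → α₂ ≤ β₂ → β₂ ≤ 2 → β₂ - α₂ ≤ (Real.sqrt τ)⁻¹ →
        ∀ x : ℂ × ℝ,
          {p : ℤ × ℤ | p.1 ∈ calN τ ∧ p.2 ∈ calN τ ∧
              x ∈ uSet τ (p.1 : ℝ) (Icc α₁ β₁) + uSet τ (p.2 : ℝ) (Icc α₂ β₂)}.Finite ∧
          {p : ℤ × ℤ | p.1 ∈ calN τ ∧ p.2 ∈ calN τ ∧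
              x ∈ uSet τ (p.1 : ℝ) (Icc α₁ β₁) + uSet τ (p.2 : ℝ) (Icc α₂ β₂)}.ncard ≤ C := by
  refine ⟨2 * (2 * 100 + 1) ^ 2, by norm_num, ?_⟩
  intro τ hτ α₁ β₁ α₂ β₂ hα₁ _ hβ₁ hJ₁ hα₂ _ hβ₂ hJ₂ x
  have hτ0 : 0 < τ := lt_trans (by norm_num) hτ
  set S := {p : ℤ × ℤ | p.1 ∈ calN τ ∧ p.2 ∈ calN τ ∧
    x ∈ uSet τ (p.1 : ℝ) (Icc α₁ β₁) + uSet τ (p.2 : ℝ) (Icc α₂ β₂)}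
  obtain ⟨hfin₁, hcard₁⟩ := Set.finite_and_ncard_le_of_abs_sub_le (K := 100)
    (T := S ∩ {p | p.2 ≤ p.1}) fun p hp q hq => mod_cast
      abs_sub_le_of_mem_uSet_add hτ0 hα₁ hβ₁ hJ₁ hα₂ hβ₂ hJ₂ hp.1.1 hp.1.2.1 hq.1.1 hq.1.2.1
        hp.2 hq.2 hp.1.2.2 hq.1.2.2
  obtain ⟨hfin₂, hcard₂⟩ := Set.finite_and_ncard_le_of_abs_sub_le (K := 100)
    (T := S \ {p | p.2 ≤ p.1}) fun p hp q hq => mod_cast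
      (abs_sub_le_of_mem_uSet_add hτ0 hα₂ hβ₂ hJ₂ hα₁ hβ₁ hJ₁ hp.1.2.1 hp.1.1 hq.1.2.1 hq.1.1
        (le_of_not_ge hp.2) (le_of_not_ge hq.2) (by rw [add_comm]; exact hp.1.2.2)
        (by rw [add_comm]; exact hq.1.2.2)).symm
  rw [← Set.inter_union_sdiff S {p | p.2 ≤ p.1}]
  exact ⟨hfin₁.union hfin₂, (Set.ncard_union_le _ _).trans (by omega)⟩
end

section
/- Let η' ∈ J̃_1 and μ ∈ 𝒩. For every real θ with μ τ^{-1/2} ≤ θ < (μ+1) τ^{-1/2}, there exists σ ∈ ℝ with |σ| ≤ τ^{-1} such that η'(cos θ, sin θ) + σ(cos θ, sin θ) ∈ u_{μ,J_1}^{η'}. -/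
open Set Pointwise

noncomputable def uSlice (τ μ : ℝ) (J : Set ℝ) (η : ℝ) : Set ℂ :=
  {ξ : ℂ | (ξ, η) ∈ uSet τ μ J}

open Real

/-! Take `σ` so that `η' + σ` is the projection `r` of `η'` onto `J₁`; as `η'` lies within `τ⁻¹`
of `J₁`, `|σ| ≤ τ⁻¹`. The point `r e^{iθ}` has modulus `r ∈ J₁`, and its argument is `θ` because
`μ ∈ 𝒩` confines `θ` to `[-π/8, π/8]`, inside the principal branch of `arg`. -/

theorem Set.abs_projIcc_sub_le {a b d x : ℝ} (h : a ≤ b) (hd : 0 ≤ d)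
    (hx : x ∈ Icc (a - d) (b + d)) : |(projIcc a b h x : ℝ) - x| ≤ d := by
  obtain ⟨hax, hxb⟩ := hx
  rw [coe_projIcc, abs_le]
  constructor
  · have : x - d ≤ min b x := le_min (by linarith) (by linarith)
    linarith [le_max_right a (min b x)]
  · have : max a (min b x) ≤ x + d := max_le (by linarith) ((min_le_right b x).trans (by linarith))
    linarith

theorem abs_le_pi_div_eight_of_mem_calN {τ θ : ℝ} {μ : ℤ} (hτ : 0 < τ) (hμ : μ ∈ calN τ)
    (hθ₁ : (μ : ℝ) * (√τ)⁻¹ ≤ θ) (hθ₂ : θ < ((μ : ℝ) + 1) * (√τ)⁻¹) : |θ| ≤ π / 8 := by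
  have hsτ : 0 < √τ := Real.sqrt_pos.2 hτ
  obtain ⟨hμlo, hμhi⟩ := abs_le.mp (show |(μ : ℝ)| ≤ √τ * (π / 8) - 1 from hμ)
  rw [abs_le]
  constructor
  · calc -(π / 8) ≤ (μ : ℝ) * (√τ)⁻¹ := by
          rw [← div_eq_mul_inv, le_div_iff₀ hsτ]; linarith
      _ ≤ θ := hθ₁
  · calc θ ≤ ((μ : ℝ) + 1) * (√τ)⁻¹ := hθ₂.le
      _ ≤ π / 8 := by rw [← div_eq_mul_inv, div_le_iff₀ hsτ]; linarith

theorem ofReal_mul_exp_mem_uSlice {τ μ η r θ : ℝ} {J : Set ℝ} (hr : 0 < r)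
    (hθ : θ ∈ Ioc (-π) π) (hθ₁ : μ * (√τ)⁻¹ ≤ θ) (hθ₂ : θ < (μ + 1) * (√τ)⁻¹)
    (hrJ : r ∈ J) (hηr : |η - r| ≤ τ⁻¹) :
    (r : ℂ) * Complex.exp (θ * Complex.I) ∈ uSlice τ μ J η := by
  have hnorm : ‖(r : ℂ) * Complex.exp (θ * Complex.I)‖ = r := by
    rw [norm_mul, Complex.norm_exp_ofReal_mul_I, mul_one, Complex.norm_real,
      Real.norm_of_nonneg hr.le]
  have harg : Complex.arg ((r : ℂ) * Complex.exp (θ * Complex.I)) = θ := by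
    rw [Complex.exp_mul_I]
    exact Complex.arg_mul_cos_add_sin_mul_I hr hθ
  refine ⟨by rwa [hnorm], ⟨?_, by rwa [harg], by rwa [harg]⟩, by rwa [hnorm]⟩
  rw [← norm_ne_zero_iff, hnorm]
  exact hr.ne'

theorem statement8 :
    ∀ τ : ℝ, (10 : ℝ) ^ 6 < τ →
    ∀ α₁ β₁ : ℝ, 1 ≤ α₁ → α₁ ≤ β₁ → β₁ ≤ 2 → β₁ - α₁ ≤ (Real.sqrt τ)⁻¹ →
    ∀ η' ∈ Icc (α₁ - τ⁻¹) (β₁ + τ⁻¹),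
    ∀ μ : ℤ, μ ∈ calN τ →
    ∀ θ : ℝ, (μ : ℝ) * (Real.sqrt τ)⁻¹ ≤ θ → θ < ((μ : ℝ) + 1) * (Real.sqrt τ)⁻¹ →
      ∃ σ : ℝ, |σ| ≤ τ⁻¹ ∧
        (η' : ℂ) * Complex.exp (θ * Complex.I) +
          (σ : ℂ) * Complex.exp (θ * Complex.I) ∈ uSlice τ (μ : ℝ) (Icc α₁ β₁) η' := by
  intro τ hτ α₁ β₁ hα₁ hαβ _ _ η' hη' μ hμ θ hθ₁ hθ₂
  have hτ₀ : 0 < τ := lt_trans (by positivity) hτ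
  set r : ℝ := ↑(projIcc α₁ β₁ hαβ η')
  have hrJ : r ∈ Icc α₁ β₁ := (projIcc α₁ β₁ hαβ η').2
  have hrη : |r - η'| ≤ τ⁻¹ := abs_projIcc_sub_le hαβ (inv_nonneg.2 hτ₀.le) hη'
  have hθ : θ ∈ Ioc (-π) π := by
    have := abs_le.mp (abs_le_pi_div_eight_of_mem_calN hτ₀ hμ hθ₁ hθ₂)
    constructor <;> linarith [Real.pi_pos]
  refine ⟨r - η', hrη, ?_⟩
  rw [← add_mul, ← Complex.ofReal_add, add_sub_cancel]
  exact ofReal_mul_exp_mem_uSlice (by linarith [hrJ.1]) hθ (mod_cast hθ₁) (mod_cast hθ₂) hrJ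
    (by rwa [abs_sub_comm])
end

section
/- Let ℓ, m be nonnegative integers with μ = ℓ + m ∈ 𝒩 and ν = −(ℓ + m) ∈ 𝒩, and let η' ∈ J̃_1, η'' ∈ J̃_2. Then the diameter of the projection onto the first coordinate of the planar set u_{μ,J_1}^{η'} + u_{ν,J_2}^{η''} satisfies diam P_1(u_{μ,J_1}^{η'} + u_{ν,J_2}^{η''}) ≤ 12(ℓ + m + 1) τ^{-1}, where P_1(ξ_1, ξ_2) = ξ_1. -/
/-!
A point `ξ` of the slice `u_{μ,J}^η` has `|‖ξ‖ - η| ≤ τ⁻¹` and `arg ξ` in an interval of length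
`s = τ^{-1/2}` contained in `[-(|μ|+1)s, (|μ|+1)s]`. Writing `Re ξ = ‖ξ‖ cos (arg ξ)` and
`cos a - cos b = -2 sin ((a+b)/2) sin ((a-b)/2)`, the cosines of two such arguments differ by at most
`(|μ|+1) s² = (|μ|+1) τ⁻¹`: the angular width `s` is compensated by the small angle `(|μ|+1)s`.
Hence real parts within one slice differ by at most `(2|μ|+4) τ⁻¹`, and the diameter of the real parts
of a sum of two slices is at most the sum of the two bounds.
-/

open Set Pointwise

open Real

theorem abs_cos_sub_cos_le_mul_div_two (x y : ℝ) : |cos x - cos y| ≤ |x + y| * |x - y| / 2 := by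
  rw [cos_sub_cos, abs_mul, abs_mul, abs_neg, abs_two]
  have hsum : |sin ((x + y) / 2)| ≤ |x + y| / 2 := by
    simpa [abs_div] using abs_sin_le_abs (x := (x + y) / 2)
  have hdiff : |sin ((x - y) / 2)| ≤ |x - y| / 2 := by
    simpa [abs_div] using abs_sin_le_abs (x := (x - y) / 2)
  calc 2 * |sin ((x + y) / 2)| * |sin ((x - y) / 2)|
      ≤ 2 * (|x + y| / 2) * (|x - y| / 2) := by gcongr
    _ = |x + y| * |x - y| / 2 := by ring

theorem Complex.abs_re_sub_re_le (ξ ζ : ℂ) :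
    |ξ.re - ζ.re| ≤ |‖ξ‖ - ‖ζ‖| + ‖ζ‖ * |Real.cos ξ.arg - Real.cos ζ.arg| := by
  rw [← Complex.norm_mul_cos_arg ξ, ← Complex.norm_mul_cos_arg ζ]
  calc |‖ξ‖ * Real.cos ξ.arg - ‖ζ‖ * Real.cos ζ.arg|
      = |(‖ξ‖ - ‖ζ‖) * Real.cos ξ.arg + ‖ζ‖ * (Real.cos ξ.arg - Real.cos ζ.arg)| := by ring_nf
    _ ≤ |‖ξ‖ - ‖ζ‖| * |Real.cos ξ.arg| + ‖ζ‖ * |Real.cos ξ.arg - Real.cos ζ.arg| := by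
        rw [← abs_norm ζ, ← abs_mul, ← abs_mul, abs_norm]
        exact abs_add_le _ _
    _ ≤ |‖ξ‖ - ‖ζ‖| + ‖ζ‖ * |Real.cos ξ.arg - Real.cos ζ.arg| := by
        gcongr
        exact mul_le_of_le_one_right (abs_nonneg _) (abs_cos_le_one _)

section GammaSet

variable {τ μ : ℝ} {ξ ζ : ℂ}

theorem abs_arg_sub_arg_le_of_mem_GammaSet (hξ : ξ ∈ GammaSet τ μ) (hζ : ζ ∈ GammaSet τ μ) :
    |ξ.arg - ζ.arg| ≤ (√τ)⁻¹ := by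
  obtain ⟨-, hξ₁, hξ₂⟩ := hξ
  obtain ⟨-, hζ₁, hζ₂⟩ := hζ
  rw [abs_sub_le_iff]
  constructor <;> linarith

theorem abs_arg_le_of_mem_GammaSet_s9 (hξ : ξ ∈ GammaSet τ μ) :
    |ξ.arg| ≤ (|μ| + 1) * (√τ)⁻¹ := by
  obtain ⟨-, hξ₁, hξ₂⟩ := hξ
  have hs : 0 ≤ (√τ)⁻¹ := by positivity
  rw [abs_le]
  constructor <;> nlinarith [neg_abs_le μ, le_abs_self μ]

theorem abs_cos_arg_sub_cos_arg_le_of_mem_GammaSet (hτ : 0 ≤ τ) (hξ : ξ ∈ GammaSet τ μ)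
    (hζ : ζ ∈ GammaSet τ μ) : |cos ξ.arg - cos ζ.arg| ≤ (|μ| + 1) * τ⁻¹ := by
  have hsq : (√τ)⁻¹ * (√τ)⁻¹ = τ⁻¹ := by rw [← mul_inv, mul_self_sqrt hτ]
  have hsum : |ξ.arg + ζ.arg| ≤ 2 * ((|μ| + 1) * (√τ)⁻¹) :=
    (abs_add_le _ _).trans <| by
      linarith [abs_arg_le_of_mem_GammaSet_s9 hξ, abs_arg_le_of_mem_GammaSet_s9 hζ]
  calc |cos ξ.arg - cos ζ.arg| ≤ |ξ.arg + ζ.arg| * |ξ.arg - ζ.arg| / 2 :=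
        abs_cos_sub_cos_le_mul_div_two _ _
    _ ≤ 2 * ((|μ| + 1) * (√τ)⁻¹) * (√τ)⁻¹ / 2 := by
        gcongr
        exact abs_arg_sub_arg_le_of_mem_GammaSet hξ hζ
    _ = (|μ| + 1) * τ⁻¹ := by rw [← hsq]; ring

end GammaSet

section uSlice

variable {τ μ η : ℝ} {J : Set ℝ} {ξ ζ : ℂ}

theorem abs_norm_sub_norm_le_of_mem_uSlice (hξ : ξ ∈ uSlice τ μ J η) (hζ : ζ ∈ uSlice τ μ J η) :
    |‖ξ‖ - ‖ζ‖| ≤ 2 * τ⁻¹ := by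
  have hξ' := abs_le.mp hξ.1
  have hζ' := abs_le.mp hζ.1
  rw [abs_le]
  constructor <;> linarith [hξ'.1, hξ'.2, hζ'.1, hζ'.2]

theorem abs_re_sub_re_le_of_mem_uSlice (hτ : 0 ≤ τ) (hJ : J ⊆ Iic 2)
    (hξ : ξ ∈ uSlice τ μ J η) (hζ : ζ ∈ uSlice τ μ J η) :
    |ξ.re - ζ.re| ≤ (2 * |μ| + 4) * τ⁻¹ := by
  have hζJ : ‖ζ‖ ≤ 2 := hJ hζ.2.2
  calc |ξ.re - ζ.re| ≤ |‖ξ‖ - ‖ζ‖| + ‖ζ‖ * |cos ξ.arg - cos ζ.arg| :=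
        Complex.abs_re_sub_re_le ξ ζ
    _ ≤ 2 * τ⁻¹ + 2 * ((|μ| + 1) * τ⁻¹) := by
        gcongr
        · exact abs_norm_sub_norm_le_of_mem_uSlice hξ hζ
        · exact abs_cos_arg_sub_cos_arg_le_of_mem_GammaSet hτ hξ.2.1 hζ.2.1
    _ = (2 * |μ| + 4) * τ⁻¹ := by ring

end uSlice

theorem Complex.diam_re_image_add_le {A B : Set ℂ} {a b : ℝ} (ha : 0 ≤ a) (hb : 0 ≤ b)
    (hA : ∀ z ∈ A, ∀ w ∈ A, |z.re - w.re| ≤ a) (hB : ∀ z ∈ B, ∀ w ∈ B, |z.re - w.re| ≤ b) :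
    Metric.diam (Complex.re '' (A + B)) ≤ a + b := by
  refine Metric.diam_le_of_forall_dist_le (add_nonneg ha hb) ?_
  rintro _ ⟨_, ⟨z, hz, z', hz', rfl⟩, rfl⟩ _ ⟨_, ⟨w, hw, w', hw', rfl⟩, rfl⟩
  calc dist (z + z').re (w + w').re = |(z.re - w.re) + (z'.re - w'.re)| := by
        rw [Real.dist_eq, Complex.add_re, Complex.add_re]; ring_nf
    _ ≤ |z.re - w.re| + |z'.re - w'.re| := abs_add_le _ _
    _ ≤ a + b := add_le_add (hA z hz w hw) (hB z' hz' w' hw')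

theorem statement9 :
    ∀ τ : ℝ, (10 : ℝ) ^ 6 < τ →
    ∀ α₁ β₁ α₂ β₂ : ℝ,
        1 ≤ α₁ → α₁ ≤ β₁ → β₁ ≤ 2 → β₁ - α₁ ≤ (Real.sqrt τ)⁻¹ →
        1 ≤ α₂ → α₂ ≤ β₂ → β₂ ≤ 2 → β₂ - α₂ ≤ (Real.sqrt τ)⁻¹ →
    ∀ ℓ m : ℕ, ∀ μ ν : ℤ, μ = (ℓ : ℤ) + (m : ℤ) → ν = -((ℓ : ℤ) + (m : ℤ)) →
      μ ∈ calN τ → ν ∈ calN τ →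
    ∀ η' ∈ Icc (α₁ - τ⁻¹) (β₁ + τ⁻¹),
    ∀ η'' ∈ Icc (α₂ - τ⁻¹) (β₂ + τ⁻¹),
      Metric.diam (Complex.re ''
          (uSlice τ (μ : ℝ) (Icc α₁ β₁) η' + uSlice τ (ν : ℝ) (Icc α₂ β₂) η''))
        ≤ 12 * ((ℓ : ℝ) + (m : ℝ) + 1) * τ⁻¹ := by
  intro τ hτ α₁ β₁ α₂ β₂ _ _ hβ₁ _ _ _ hβ₂ _ ℓ m μ ν hμ hν _ _ η' _ η'' _
  have hτ0 : 0 ≤ τ := by linarith [show (0 : ℝ) < 10 ^ 6 by norm_num]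
  have hk : 0 ≤ (ℓ : ℝ) + m := by positivity
  have habsμ : |(μ : ℝ)| = ℓ + m := by rw [hμ]; push_cast; exact abs_of_nonneg hk
  have habsν : |(ν : ℝ)| = ℓ + m := by rw [hν]; push_cast; rw [abs_neg, abs_of_nonneg hk]
  calc _ ≤ (2 * |(μ : ℝ)| + 4) * τ⁻¹ + (2 * |(ν : ℝ)| + 4) * τ⁻¹ :=
        Complex.diam_re_image_add_le (by positivity) (by positivity)
          (fun _ hz _ hw ↦ abs_re_sub_re_le_of_mem_uSlice hτ0 (fun _ hr ↦ hr.2.trans hβ₁) hz hw)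
          (fun _ hz _ hw ↦ abs_re_sub_re_le_of_mem_uSlice hτ0 (fun _ hr ↦ hr.2.trans hβ₂) hz hw)
    _ = (4 * ((ℓ : ℝ) + m) + 8) * τ⁻¹ := by rw [habsμ, habsν]; ring
    _ ≤ 12 * ((ℓ : ℝ) + m + 1) * τ⁻¹ := by gcongr; linarith
end

section
/- Let ℓ ∈ ℕ_0^* with 0 ≤ ℓ ≤ (π/8) δ^{-1/2} − 1, let η' ∈ J̃_1 and η'' ∈ J̃_2 with η = η' + η'', write p_{ℓ,δ} = p_{ℓ,δ}(η',η''), and let b_1 > 0 satisfy |p_{ℓ,δ}| − b_1 ℓ_* δ > |η' − η''|. Then there exist constants b_2, b_3 > 0, depending only on b_1 (independent of η', η'', δ, and ℓ), such that A(|p_{ℓ,δ}| − b_1 ℓ_* δ, |p_{ℓ,δ}| + b_1 ℓ_* δ) ∩ 𝓔̃(η',η'') ⊆ R(p_{ℓ,δ}; b_2 ℓ_* δ, b_3 δ^{1/2}). -/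
open Set Pointwise

noncomputable def GammaD (δ μ : ℝ) : Set ℂ :=
  {ξ : ℂ | ξ ≠ 0 ∧ μ * Real.sqrt δ ≤ ξ.arg ∧ ξ.arg < (μ + 1) * Real.sqrt δ}

def calND (δ : ℝ) : Set ℤ :=
  {μ : ℤ | |(μ : ℝ)| ≤ Real.pi / 8 * (Real.sqrt δ)⁻¹ - 1}

noncomputable def uSetD (δ μ : ℝ) (J : Set ℝ) : Set (ℂ × ℝ) :=
  {p : ℂ × ℝ | |p.2 - ‖p.1‖| ≤ δ ∧ p.1 ∈ GammaD δ μ ∧ ‖p.1‖ ∈ J}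

noncomputable def rot (σ : ℝ) : ℂ → ℂ := fun z => Complex.exp (σ * Complex.I) * z

noncomputable def pPt (δ ℓ η' η'' : ℝ) : ℂ :=
  ⟨(η' + η'') * Real.cos (ℓ * Real.sqrt δ), (η' - η'') * Real.sin (ℓ * Real.sqrt δ)⟩

def rect (p : ℂ) (a b : ℝ) : Set ℂ :=
  {z : ℂ | |z.re - p.re| ≤ a ∧ |z.im - p.im| ≤ b}

def ann (r s : ℝ) : Set ℂ := {ξ : ℂ | r ≤ ‖ξ‖ ∧ ‖ξ‖ ≤ s}

noncomputable def curveE (η' η'' : ℝ) : Set ℂ :=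
  if η' = η'' then {ξ : ℂ | ξ.im = 0 ∧ 1 ≤ ξ.re ∧ ξ.re ≤ η' + η''}
  else {ξ : ℂ | ξ.re ^ 2 / (η' + η'') ^ 2 + ξ.im ^ 2 / (η' - η'') ^ 2 = 1 ∧
        1 ≤ ξ.re ∧ ξ.re ≤ η' + η'' ∧ (η'' ≤ η' → 0 ≤ ξ.im) ∧ (η' ≤ η'' → ξ.im ≤ 0)}

noncomputable def tildeE (η' η'' : ℝ) : Set ℂ :=
  curveE η' η'' ∪ {ξ : ℂ | ξ.im = 0 ∧ η' + η'' ≤ ξ.re ∧ ξ.re ≤ 5}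

/-
Parametrise `𝓔(η', η'')` as `E t = (η cos t, (η' - η'') sin t)`, `t ∈ [0, π/2]`, so that
`p = E s` with `s = ℓ √δ ≤ π/8`, and the segment of `𝓔̃` as `E 0 + c`, `c ≥ 0`.
Since `|E t|² = η² - 4 η' η'' sin² t`, the annulus condition bounds
`|sin² t - sin² s| = |sin (t + s) sin (t - s)| ≳ (t + s) |t - s|` by `O(ℓ_* δ)`.
This gives `|cos t - cos s| ≤ (t + s) |t - s| / 2 = O(ℓ_* δ)` in the first coordinate, and,
as `t + s ≥ max (|t - s|, s)` with `s = ℓ √δ` and `ℓ ∈ {0} ∪ [1/2, ∞)`, `|t - s| = O(√δ)` in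
the second. On the segment, `|E 0| = η ≥ |p|` forces `c ≤ b₁ ℓ_* δ`.
-/

open Real

noncomputable def ellipsePt (η' η'' t : ℝ) : ℂ :=
  ⟨(η' + η'') * cos t, (η' - η'') * sin t⟩

@[simp] lemma ellipsePt_re (η' η'' t : ℝ) : (ellipsePt η' η'' t).re = (η' + η'') * cos t := rfl

@[simp] lemma ellipsePt_im (η' η'' t : ℝ) : (ellipsePt η' η'' t).im = (η' - η'') * sin t := rfl

lemma pPt_eq_ellipsePt (δ ℓ η' η'' : ℝ) : pPt δ ℓ η' η'' = ellipsePt η' η'' (ℓ * √δ) := rfl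

section Trigonometry

variable {x t s : ℝ}

lemma div_four_le_sin (h₀ : 0 ≤ x) (h₂ : x ≤ 2) : x / 4 ≤ sin x := by
  rcases le_or_gt x (π / 2) with h | h
  · have hπ : 1 / 4 ≤ 2 / π := by
      rw [div_le_div_iff₀ (by norm_num) pi_pos]; linarith [pi_le_four]
    nlinarith [mul_le_sin h₀ h]
  · -- here `sin x = cos (x - π / 2) ≥ 1 - (1 / 2) ^ 2 / 2 ≥ x / 4`
    rw [← cos_sub_pi_div_two]
    nlinarith [one_sub_sq_div_two_le_cos (x := x - π / 2), pi_gt_three]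

lemma abs_div_four_le_abs_sin (h : |x| ≤ 2) : |x| / 4 ≤ |sin x| := by
  rcases le_total 0 x with hx | hx
  · rw [abs_of_nonneg hx] at h ⊢
    exact (div_four_le_sin hx h).trans (le_abs_self _)
  · rw [abs_of_nonpos hx] at h ⊢
    rw [← abs_neg, ← sin_neg]
    exact (div_four_le_sin (neg_nonneg.2 hx) h).trans (le_abs_self _)

lemma mul_abs_sub_le_abs_sin_mul_sin (ht : 0 ≤ t) (hs : 0 ≤ s) (h : t + s ≤ 2) :
    (t + s) * |t - s| ≤ 16 * |sin (t + s) * sin (t - s)| := by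
  have hsub : |t - s| ≤ t + s := abs_sub_le_iff.2 ⟨by linarith, by linarith⟩
  have hadd := abs_div_four_le_abs_sin (x := t + s) (by rwa [abs_of_nonneg (by linarith)])
  have hdiff := abs_div_four_le_abs_sin (x := t - s) (hsub.trans h)
  rw [abs_of_nonneg (by linarith)] at hadd
  rw [abs_mul]
  nlinarith [mul_le_mul hadd hdiff (by positivity) (abs_nonneg _)]

lemma abs_cos_sub_cos_le_mul (t s : ℝ) : |cos t - cos s| ≤ |t + s| * |t - s| / 2 := by
  rw [cos_sub_cos, abs_mul, abs_mul]
  have h₁ : |sin ((t + s) / 2)| ≤ |t + s| / 2 := by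
    simpa [abs_div] using abs_sin_le_abs (x := (t + s) / 2)
  have h₂ : |sin ((t - s) / 2)| ≤ |t - s| / 2 := by
    simpa [abs_div] using abs_sin_le_abs (x := (t - s) / 2)
  norm_num
  nlinarith [mul_le_mul h₁ h₂ (abs_nonneg _) (by positivity)]

end Trigonometry

section Ellipse

variable {η' η'' t s e : ℝ}

lemma norm_ellipsePt_sq :
    ‖ellipsePt η' η'' t‖ ^ 2 = (η' + η'') ^ 2 - 4 * (η' * η'') * sin t ^ 2 := by
  rw [Complex.sq_norm, Complex.normSq_apply, ellipsePt_re, ellipsePt_im]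
  linear_combination (η' + η'') ^ 2 * sin_sq_add_cos_sq t

lemma norm_ellipsePt_sq_sub_norm_ellipsePt_sq :
    ‖ellipsePt η' η'' s‖ ^ 2 - ‖ellipsePt η' η'' t‖ ^ 2
      = 4 * (η' * η'') * (sin (t + s) * sin (t - s)) := by
  rw [norm_ellipsePt_sq, norm_ellipsePt_sq, sin_add, sin_sub]
  linear_combination 4 * (η' * η'') *
    (sin s ^ 2 * sin_sq_add_cos_sq t - sin t ^ 2 * sin_sq_add_cos_sq s)

lemma norm_ellipsePt_le (h : 0 ≤ η' * η'') (t : ℝ) : ‖ellipsePt η' η'' t‖ ≤ |η' + η''| := by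
  have hsq : ‖ellipsePt η' η'' t‖ ^ 2 ≤ (η' + η'') ^ 2 := by
    rw [norm_ellipsePt_sq]; nlinarith [sq_nonneg (sin t)]
  simpa using sq_le_sq.1 hsq

lemma norm_ellipsePt_zero_add {c : ℝ} (hη : 0 ≤ η' + η'') (hc : 0 ≤ c) :
    ‖ellipsePt η' η'' 0 + c‖ = η' + η'' + c := by
  have h : ellipsePt η' η'' 0 + c = ((η' + η'' + c : ℝ) : ℂ) := by
    apply Complex.ext <;> simp
  rw [h, Complex.norm_of_nonneg (by linarith)]

lemma abs_mul_mul_abs_sub_le_norm_ellipsePt_sq_sub (ht : 0 ≤ t) (hs : 0 ≤ s)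
    (h : t + s ≤ 2) :
    |η' * η''| * ((t + s) * |t - s|)
      ≤ 4 * |‖ellipsePt η' η'' s‖ ^ 2 - ‖ellipsePt η' η'' t‖ ^ 2| := by
  rw [norm_ellipsePt_sq_sub_norm_ellipsePt_sq, abs_mul (4 * (η' * η'')), abs_mul 4,
    abs_of_pos (four_pos : (0 : ℝ) < 4)]
  nlinarith [mul_abs_sub_le_abs_sin_mul_sin ht hs h, abs_nonneg (η' * η'')]

lemma mul_abs_sub_le_of_abs_norm_ellipsePt_sub_le (h₁ : η' ∈ Icc (1 / 2 : ℝ) (5 / 2))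
    (h₂ : η'' ∈ Icc (1 / 2 : ℝ) (5 / 2)) (ht : t ∈ Icc 0 (π / 2)) (hs : s ∈ Icc 0 (π / 8))
    (h : |‖ellipsePt η' η'' t‖ - ‖ellipsePt η' η'' s‖| ≤ e) :
    (t + s) * |t - s| ≤ 160 * e := by
  obtain ⟨h₁l, h₁u⟩ := h₁
  obtain ⟨h₂l, h₂u⟩ := h₂
  have hprod : 1 / 4 ≤ |η' * η''| := by
    rw [abs_of_pos (by positivity)]; nlinarith
  have hnorm : ∀ u, ‖ellipsePt η' η'' u‖ ≤ 5 := fun u =>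
    (norm_ellipsePt_le (by positivity) u).trans (by rw [abs_le]; constructor <;> linarith)
  have hsq : |‖ellipsePt η' η'' s‖ ^ 2 - ‖ellipsePt η' η'' t‖ ^ 2| ≤ 10 * e := by
    rw [sq_sub_sq, abs_mul, abs_sub_comm, abs_of_nonneg (by positivity)]
    nlinarith [hnorm s, hnorm t, abs_nonneg (‖ellipsePt η' η'' t‖ - ‖ellipsePt η' η'' s‖)]
  have hkey := abs_mul_mul_abs_sub_le_norm_ellipsePt_sq_sub (η' := η') (η'' := η'') ht.1 hs.1
    (by linarith [ht.2, hs.2, pi_lt_d2])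
  nlinarith [mul_nonneg (add_nonneg ht.1 hs.1) (abs_nonneg (t - s))]

end Ellipse

lemma le_mul_sqrt_of_mul_add_le {k : ℕ} {δ x B : ℝ} (hδ : 0 < δ) (hx : 0 ≤ x)
    (h : x * (x + k / 2 * √δ) ≤ B * max (k / 2 : ℝ) (1 / 2) * δ) : x ≤ (B + 1) * √δ := by
  have hδ' : √δ ^ 2 = δ := sq_sqrt hδ.le
  have hδ₀ : 0 < √δ := sqrt_pos.2 hδ
  rcases k.eq_zero_or_pos with rfl | hk
  · norm_num at h
    have hB : 0 ≤ B := by nlinarith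
    by_contra! hlt
    have hsq : (B + 1) ^ 2 * δ < x * x := by
      rw [← hδ', ← mul_pow]
      exact pow_two ((B + 1) * √δ) ▸ mul_self_lt_mul_self (by positivity) hlt
    nlinarith [mul_nonneg hB hδ.le]
  · have hk' : (1 / 2 : ℝ) ≤ k / 2 := by
      have : (1 : ℝ) ≤ k := by exact_mod_cast hk
      linarith
    rw [max_eq_left hk'] at h
    have hxB : x * (k / 2 * √δ) ≤ B * √δ * (k / 2 * √δ) :=
      calc x * (k / 2 * √δ) ≤ x * (x + k / 2 * √δ) := by nlinarith
        _ ≤ B * (k / 2) * √δ ^ 2 := by rwa [hδ']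
        _ = B * √δ * (k / 2 * √δ) := by ring
    nlinarith [le_of_mul_le_mul_right hxB (by positivity)]

lemma ellipsePt_add_mem_rect {η' η'' b δ t c : ℝ} {k : ℕ} (h₁ : η' ∈ Icc (1 / 2 : ℝ) (5 / 2))
    (h₂ : η'' ∈ Icc (1 / 2 : ℝ) (5 / 2)) (hδ : 0 < δ) (hk : k / 2 * √δ ≤ π / 8)
    (ht : t ∈ Icc 0 (π / 2)) (hc : 0 ≤ c) (hcb : c ≤ b * max (k / 2 : ℝ) (1 / 2) * δ)
    (h : |‖ellipsePt η' η'' t‖ - ‖ellipsePt η' η'' (k / 2 * √δ)‖|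
      ≤ b * max (k / 2 : ℝ) (1 / 2) * δ) :
    ellipsePt η' η'' t + c ∈ rect (ellipsePt η' η'' (k / 2 * √δ))
      (401 * b * max (k / 2 : ℝ) (1 / 2) * δ) ((640 * b + 2) * √δ) := by
  set s := (k : ℝ) / 2 * √δ with hs_def
  have hs : s ∈ Icc 0 (π / 8) := ⟨by positivity, hk⟩
  have hprod := mul_abs_sub_le_of_abs_norm_ellipsePt_sub_le h₁ h₂ ht hs h
  have hts : |t - s| ≤ (320 * b + 1) * √δ := by
    refine le_mul_sqrt_of_mul_add_le (k := k) hδ (abs_nonneg _) ?_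
    rw [← hs_def]
    have hsub : |t - s| ≤ t + s := abs_sub_le_iff.2 ⟨by linarith [hs.1], by linarith [ht.1]⟩
    have hsum : |t - s| + s ≤ 2 * (t + s) := by linarith [ht.1, hs.1]
    nlinarith [mul_le_mul_of_nonneg_left hsum (abs_nonneg (t - s))]
  refine ⟨?_, ?_⟩
  · have hcos := abs_cos_sub_cos_le_mul t s
    rw [abs_of_nonneg (add_nonneg ht.1 hs.1)] at hcos
    have hη : |η' + η''| ≤ 5 := abs_le.2 ⟨by linarith [h₁.1, h₂.1], by linarith [h₁.2, h₂.2]⟩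
    calc |(ellipsePt η' η'' t + c).re - (ellipsePt η' η'' s).re|
        = |c + (η' + η'') * (cos t - cos s)| := by
          simp only [Complex.add_re, Complex.ofReal_re, ellipsePt_re]; congr 1; ring
      _ ≤ c + |η' + η''| * |cos t - cos s| := by
          rw [← abs_mul]; exact (abs_add_le _ _).trans_eq (by rw [abs_of_nonneg hc])
      _ ≤ b * max (k / 2 : ℝ) (1 / 2) * δ + 5 * ((t + s) * |t - s| / 2) := by gcongr
      _ ≤ 401 * b * max (k / 2 : ℝ) (1 / 2) * δ := by linarith
  · have hd : |η' - η''| ≤ 2 := abs_le.2 ⟨by linarith [h₁.1, h₂.2], by linarith [h₁.2, h₂.1]⟩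
    calc |(ellipsePt η' η'' t + c).im - (ellipsePt η' η'' s).im|
        = |η' - η''| * |sin t - sin s| := by
          simp only [Complex.add_im, Complex.ofReal_im, ellipsePt_im, add_zero, ← mul_sub,
            abs_mul]
      _ ≤ 2 * |t - s| := mul_le_mul hd (abs_sin_sub_sin_le t s) (abs_nonneg _) zero_le_two
      _ ≤ (640 * b + 2) * √δ := by linarith

lemma curveE_subset_image_ellipsePt {η' η'' : ℝ} (hη : 0 < η' + η'') :
    curveE η' η'' ⊆ ellipsePt η' η'' '' Icc 0 (π / 2) := by
  intro ξ hξ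
  have hre : 1 ≤ ξ.re ∧ ξ.re ≤ η' + η'' := by
    unfold curveE at hξ
    split_ifs at hξ
    · exact hξ.2
    · exact ⟨hξ.2.1, hξ.2.2.1⟩
  have hx₀ : 0 ≤ ξ.re / (η' + η'') := div_nonneg (by linarith) hη.le
  set t := arccos (ξ.re / (η' + η''))
  have hcos : (η' + η'') * cos t = ξ.re := by
    rw [cos_arccos (by linarith) ((div_le_one hη).2 hre.2)]
    field_simp
  have ht : t ∈ Icc 0 (π / 2) := ⟨arccos_nonneg _, arccos_le_pi_div_two.2 hx₀⟩
  have hsin : 0 ≤ sin t := sin_nonneg_of_nonneg_of_le_pi ht.1 (by linarith [ht.2, pi_pos])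
  refine ⟨t, ht, Complex.ext hcos ?_⟩
  rw [ellipsePt_im]
  unfold curveE at hξ
  split_ifs at hξ with heq
  · rw [heq, sub_self, zero_mul, hξ.1]
  obtain ⟨hell, -, -, hpos, hneg⟩ := hξ
  -- the ellipse equation pins down `ξ.im` up to sign, and the branch condition fixes the sign
  have hsq : ((η' - η'') * sin t) ^ 2 = ξ.im ^ 2 := by
    rw [← hcos] at hell
    field_simp at hell
    linear_combination (η' - η'') ^ 2 * sin_sq_add_cos_sq t - hell
  rcases lt_or_gt_of_ne heq with hlt | hgt
  · have h₁ : (η' - η'') * sin t ≤ 0 := mul_nonpos_of_nonpos_of_nonneg (by linarith) hsin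
    have h₂ := hneg hlt.le
    nlinarith [sq_nonneg ((η' - η'') * sin t + ξ.im)]
  · have h₁ : 0 ≤ (η' - η'') * sin t := mul_nonneg (by linarith) hsin
    exact (sq_eq_sq₀ h₁ (hpos hgt.le)).1 hsq

lemma tildeE_subset_image_ellipsePt_union {η' η'' : ℝ} (hη : 0 < η' + η'') :
    tildeE η' η'' ⊆ ellipsePt η' η'' '' Icc 0 (π / 2) ∪
      (fun c : ℝ => ellipsePt η' η'' 0 + c) '' Ici 0 := by
  rintro ξ (hξ | ⟨him, hre, -⟩)
  · exact Or.inl (curveE_subset_image_ellipsePt hη hξ)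
  · refine Or.inr ⟨ξ.re - (η' + η''), sub_nonneg.2 hre, Complex.ext ?_ ?_⟩ <;> simp [him]

theorem statement11 :
    ∀ b₁ : ℝ, 0 < b₁ →
    ∃ b₂ b₃ : ℝ, 0 < b₂ ∧ 0 < b₃ ∧
      ∀ δ : ℝ, 0 < δ → δ < 1 / 1000000 →
      ∀ α₁ β₁ α₂ β₂ : ℝ,
        1 ≤ α₁ → α₁ ≤ β₁ → β₁ ≤ 2 → β₁ - α₁ ≤ Real.sqrt δ →
        1 ≤ α₂ → α₂ ≤ β₂ → β₂ ≤ 2 → β₂ - α₂ ≤ Real.sqrt δ →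
      ∀ k : ℕ, (k : ℝ) / 2 ≤ Real.pi / 8 * (Real.sqrt δ)⁻¹ - 1 →
      ∀ η' ∈ Icc (α₁ - δ) (β₁ + δ),
      ∀ η'' ∈ Icc (α₂ - δ) (β₂ + δ),
        ‖pPt δ ((k : ℝ) / 2) η' η''‖ - b₁ * max ((k : ℝ) / 2) (1 / 2) * δ
            > |η' - η''| →
        ann (‖pPt δ ((k : ℝ) / 2) η' η''‖ - b₁ * max ((k : ℝ) / 2) (1 / 2) * δ)
            (‖pPt δ ((k : ℝ) / 2) η' η''‖ + b₁ * max ((k : ℝ) / 2) (1 / 2) * δ)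
          ∩ tildeE η' η''
          ⊆ rect (pPt δ ((k : ℝ) / 2) η' η'')
              (b₂ * max ((k : ℝ) / 2) (1 / 2) * δ) (b₃ * Real.sqrt δ) := by
  intro b₁ hb₁
  refine ⟨401 * b₁, 640 * b₁ + 2, by positivity, by positivity, ?_⟩
  intro δ hδ hδ₁ α₁ β₁ α₂ β₂ hα₁ _ hβ₁ _ hα₂ _ hβ₂ _ k hk η' hη' η'' hη'' _ ξ ⟨⟨hξl, hξu⟩, hξE⟩
  have h₁ : η' ∈ Icc (1 / 2 : ℝ) (5 / 2) := ⟨by linarith [hη'.1], by linarith [hη'.2]⟩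
  have h₂ : η'' ∈ Icc (1 / 2 : ℝ) (5 / 2) := ⟨by linarith [hη''.1], by linarith [hη''.2]⟩
  have hη : 0 < η' + η'' := by linarith [h₁.1, h₂.1]
  have hs : (k : ℝ) / 2 * √δ ≤ π / 8 := by
    have hδ₀ : 0 < √δ := sqrt_pos.2 hδ
    calc (k : ℝ) / 2 * √δ ≤ (π / 8 * (√δ)⁻¹ - 1) * √δ := by gcongr
      _ = π / 8 - √δ := by field_simp
      _ ≤ π / 8 := by linarith
  rw [pPt_eq_ellipsePt] at hξl hξu ⊢
  rcases tildeE_subset_image_ellipsePt_union hη hξE with ⟨t, ht, rfl⟩ | ⟨c, (hc : 0 ≤ c), rfl⟩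
  · simpa using ellipsePt_add_mem_rect h₁ h₂ hδ hs ht le_rfl (by positivity)
      (abs_sub_le_iff.2 ⟨by linarith, by linarith⟩) (c := 0)
  · have hvertex : ‖ellipsePt η' η'' 0‖ = η' + η'' := by
      simpa using norm_ellipsePt_zero_add hη.le (le_refl (0 : ℝ))
    have hp := (norm_ellipsePt_le (by nlinarith [h₁.1, h₂.1]) (k / 2 * √δ)).trans_eq
      (abs_of_pos hη)
    rw [norm_ellipsePt_zero_add hη.le hc] at hξl hξu
    exact ellipsePt_add_mem_rect h₁ h₂ hδ hs ⟨le_rfl, by positivity⟩ hc (by linarith)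
      (abs_sub_le_iff.2 ⟨by linarith, by linarith⟩)
end

section
/- Let ℓ ∈ ℕ_0^* with 0 ≤ ℓ ≤ (π/8) δ^{-1/2} − 1, let η' ∈ J̃_1 and η'' ∈ J̃_2 with η = η' + η'', write p_{ℓ,δ} = p_{ℓ,δ}(η',η''), and let c_1, c_2 > 0 be constants. Then there exist constants c_3, c_4 > 0, depending only on c_1 and c_2 (independent of η', η'', δ, ℓ), such that R(p_{ℓ,δ}; c_1 ℓ_* δ, c_2 δ^{1/2}) ⊆ A(|p_{ℓ,δ}| − c_3 ℓ_* δ, |p_{ℓ,δ}| + c_4 ℓ_* δ). -/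
open Set Pointwise

/-!
For `z` in the rectangle, `‖z‖² - ‖p‖²` is bounded coordinatewise by `a (2|p.re| + a) + b (2|p.im| + b)`,
and since `‖p‖ ≥ 1` the same bound holds for `‖z‖ - ‖p‖`. The long side `b = c₂ δ^{1/2}` of the
rectangle is only harmless because it points in the angular direction: `|p.im| ≲ ℓ δ^{1/2}`, so
`b |p.im| ≲ ℓ_* δ`, while `b² ≲ δ` and the radial side contributes `a ≲ ℓ_* δ`.
-/

open Real

lemma abs_sq_sub_sq_le_of_abs_sub_le {x y a : ℝ} (h : |x - y| ≤ a) :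
    |x ^ 2 - y ^ 2| ≤ a * (2 * |y| + a) := by
  have hsum : |x + y| ≤ 2 * |y| + a := by
    calc |x + y| = |(x - y) + 2 * y| := by ring_nf
      _ ≤ |x - y| + |2 * y| := abs_add_le _ _
      _ ≤ 2 * |y| + a := by rw [abs_mul, abs_two]; linarith
  calc |x ^ 2 - y ^ 2| = |x - y| * |x + y| := by rw [← abs_mul]; ring_nf
    _ ≤ a * (2 * |y| + a) := mul_le_mul h hsum (abs_nonneg _) ((abs_nonneg _).trans h)

lemma abs_sub_mul_le_abs_sq_sub_sq {x y : ℝ} (hx : 0 ≤ x) (hy : 0 ≤ y) :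
    |x - y| * y ≤ |x ^ 2 - y ^ 2| := by
  calc |x - y| * y ≤ |x - y| * (x + y) := by gcongr; linarith
    _ = |x ^ 2 - y ^ 2| := by rw [← abs_of_nonneg (add_nonneg hx hy), ← abs_mul]; ring_nf

lemma abs_norm_sq_sub_norm_sq_le_of_mem_rect {p z : ℂ} {a b : ℝ} (hz : z ∈ rect p a b) :
    |‖z‖ ^ 2 - ‖p‖ ^ 2| ≤ a * (2 * |p.re| + a) + b * (2 * |p.im| + b) := by
  have hre := abs_sq_sub_sq_le_of_abs_sub_le hz.1
  have him := abs_sq_sub_sq_le_of_abs_sub_le hz.2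
  calc |‖z‖ ^ 2 - ‖p‖ ^ 2| = |(z.re ^ 2 - p.re ^ 2) + (z.im ^ 2 - p.im ^ 2)| := by
        simp only [Complex.sq_norm, Complex.normSq_apply]; ring_nf
    _ ≤ |z.re ^ 2 - p.re ^ 2| + |z.im ^ 2 - p.im ^ 2| := abs_add_le _ _
    _ ≤ _ := add_le_add hre him

lemma mem_ann_iff {r e : ℝ} {z : ℂ} : z ∈ ann (r - e) (r + e) ↔ |‖z‖ - r| ≤ e := by
  rw [abs_sub_le_iff, ann, mem_ofPred_eq]
  constructor <;> rintro ⟨h₁, h₂⟩ <;> constructor <;> linarith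

lemma ann_subset_ann {r e e' : ℝ} (he : e ≤ e') : ann (r - e) (r + e) ⊆ ann (r - e') (r + e') :=
  fun _ hz ↦ mem_ann_iff.2 ((mem_ann_iff.1 hz).trans he)

lemma rect_subset_ann_of_one_le_norm {p : ℂ} {a b : ℝ} (hp : 1 ≤ ‖p‖) :
    rect p a b ⊆ ann (‖p‖ - (a * (2 * |p.re| + a) + b * (2 * |p.im| + b)))
      (‖p‖ + (a * (2 * |p.re| + a) + b * (2 * |p.im| + b))) := by
  intro z hz
  refine mem_ann_iff.2 ?_
  calc |‖z‖ - ‖p‖| ≤ |‖z‖ - ‖p‖| * ‖p‖ := le_mul_of_one_le_right (abs_nonneg _) hp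
    _ ≤ |‖z‖ ^ 2 - ‖p‖ ^ 2| := abs_sub_mul_le_abs_sq_sub_sq (norm_nonneg _) (norm_nonneg _)
    _ ≤ _ := abs_norm_sq_sub_norm_sq_le_of_mem_rect hz

section pPt

variable (δ ℓ η' η'' : ℝ)

lemma abs_pPt_re_le : |(pPt δ ℓ η' η'').re| ≤ |η' + η''| := by
  simp only [pPt, abs_mul]
  exact mul_le_of_le_one_right (abs_nonneg _) (abs_cos_le_one _)

lemma abs_pPt_im_le : |(pPt δ ℓ η' η'').im| ≤ |η' - η''| * |ℓ * √δ| := by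
  rw [pPt, abs_mul]
  exact mul_le_mul_of_nonneg_left abs_sin_le_abs (abs_nonneg _)

variable {δ ℓ η' η''}

lemma one_le_norm_pPt (hη : 8 / 7 ≤ η' + η'') (hθ : |ℓ * √δ| ≤ 1 / 2) :
    1 ≤ ‖pPt δ ℓ η' η''‖ := by
  have hcos : 7 / 8 ≤ cos (ℓ * √δ) := by
    have := one_sub_sq_div_two_le_cos (x := ℓ * √δ)
    nlinarith [sq_abs (ℓ * √δ), abs_nonneg (ℓ * √δ)]
  calc (1 : ℝ) ≤ (η' + η'') * cos (ℓ * √δ) := by nlinarith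
    _ ≤ |(pPt δ ℓ η' η'').re| := le_abs_self _
    _ ≤ ‖pPt δ ℓ η' η''‖ := Complex.abs_re_le_norm _

end pPt

lemma max_mul_sqrt_le_half {δ ℓ : ℝ} (hδ : 0 < δ) (hδ' : δ < 1 / 1000000)
    (hℓ : ℓ ≤ π / 8 * (√δ)⁻¹ - 1) : max ℓ (1 / 2) * √δ ≤ 1 / 2 := by
  have hs : 0 < √δ := sqrt_pos.2 hδ
  have hs' : √δ < 1 / 1000 := by
    rw [show (1 / 1000 : ℝ) = √((1 / 1000) ^ 2) by rw [sqrt_sq (by norm_num)]]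
    exact sqrt_lt_sqrt hδ.le (by linarith)
  have hℓs : ℓ * √δ ≤ π / 8 - √δ := by
    have := mul_le_mul_of_nonneg_right hℓ hs.le
    rwa [sub_mul, mul_assoc, inv_mul_cancel₀ hs.ne', mul_one, one_mul] at this
  have := pi_lt_d2
  rw [max_mul_of_nonneg _ _ hs.le, max_le_iff]
  constructor <;> linarith

lemma rect_error_le {c₁ c₂ δ L P Q : ℝ} (hc₁ : 0 ≤ c₁) (hc₂ : 0 ≤ c₂) (hδ : 0 ≤ δ)
    (hL : 1 / 2 ≤ L) (hLδ : L * δ ≤ 1) (hP : |P| ≤ 5) (hQ : |Q| ≤ 2 * L * √δ) :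
    c₁ * L * δ * (2 * |P| + c₁ * L * δ) + c₂ * √δ * (2 * |Q| + c₂ * √δ)
      ≤ (c₁ * (10 + c₁) + 2 * c₂ * (2 + c₂)) * L * δ := by
  have hre : c₁ * L * δ * (2 * |P| + c₁ * L * δ) ≤ c₁ * L * δ * (10 + c₁) := by
    have : c₁ * L * δ ≤ c₁ := by rw [mul_assoc]; exact mul_le_of_le_one_right hc₁ hLδ
    gcongr
    linarith
  have him : c₂ * √δ * (2 * |Q| + c₂ * √δ) ≤ c₂ * √δ * (4 * L * √δ + 2 * c₂ * L * √δ) := by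
    have hb : c₂ * √δ ≤ 2 * c₂ * L * √δ := by
      nlinarith [mul_nonneg hc₂ (sqrt_nonneg δ)]
    exact mul_le_mul_of_nonneg_left (add_le_add (by linarith) hb) (by positivity)
  calc _ ≤ c₁ * L * δ * (10 + c₁) + c₂ * √δ * (4 * L * √δ + 2 * c₂ * L * √δ) :=
        add_le_add hre him
    _ = _ := by linear_combination (4 * c₂ * L + 2 * c₂ ^ 2 * L) * mul_self_sqrt hδ

theorem statement12 :
    ∀ c₁ c₂ : ℝ, 0 < c₁ → 0 < c₂ →
    ∃ c₃ c₄ : ℝ, 0 < c₃ ∧ 0 < c₄ ∧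
      ∀ δ : ℝ, 0 < δ → δ < 1 / 1000000 →
      ∀ α₁ β₁ α₂ β₂ : ℝ,
        1 ≤ α₁ → α₁ ≤ β₁ → β₁ ≤ 2 → β₁ - α₁ ≤ Real.sqrt δ →
        1 ≤ α₂ → α₂ ≤ β₂ → β₂ ≤ 2 → β₂ - α₂ ≤ Real.sqrt δ →
      ∀ k : ℕ, (k : ℝ) / 2 ≤ Real.pi / 8 * (Real.sqrt δ)⁻¹ - 1 →
      ∀ η' ∈ Icc (α₁ - δ) (β₁ + δ),
      ∀ η'' ∈ Icc (α₂ - δ) (β₂ + δ),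
        rect (pPt δ ((k : ℝ) / 2) η' η'')
            (c₁ * max ((k : ℝ) / 2) (1 / 2) * δ) (c₂ * Real.sqrt δ)
          ⊆ ann (‖pPt δ ((k : ℝ) / 2) η' η''‖
                  - c₃ * max ((k : ℝ) / 2) (1 / 2) * δ)
                (‖pPt δ ((k : ℝ) / 2) η' η''‖
                  + c₄ * max ((k : ℝ) / 2) (1 / 2) * δ) := by
  intro c₁ c₂ hc₁ hc₂
  set C := c₁ * (10 + c₁) + 2 * c₂ * (2 + c₂)
  refine ⟨C, C, by positivity, by positivity, ?_⟩
  intro δ hδ hδ' α₁ β₁ α₂ β₂ hα₁ _ hβ₁ _ hα₂ _ hβ₂ _ k hk η' ⟨hη'₁, hη'₂⟩ η'' ⟨hη''₁, hη''₂⟩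
  set L := max ((k : ℝ) / 2) (1 / 2)
  have hLs : L * √δ ≤ 1 / 2 := max_mul_sqrt_le_half hδ hδ' hk
  have hθ : |(k : ℝ) / 2 * √δ| ≤ L * √δ := by
    rw [abs_of_nonneg (by positivity)]
    exact mul_le_mul_of_nonneg_right (le_max_left _ _) (sqrt_nonneg δ)
  have hp : 1 ≤ ‖pPt δ ((k : ℝ) / 2) η' η''‖ :=
    one_le_norm_pPt (by linarith) (hθ.trans hLs)
  refine (rect_subset_ann_of_one_le_norm hp).trans (ann_subset_ann ?_)
  refine rect_error_le hc₁.le hc₂.le hδ.le (le_max_right _ _) ?_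
    ((abs_pPt_re_le ..).trans (abs_le.2 ⟨by linarith, by linarith⟩))
    ((abs_pPt_im_le ..).trans ?_)
  · calc L * δ = L * √δ * √δ := by rw [mul_assoc, mul_self_sqrt hδ.le]
      _ ≤ 1 / 2 * 1 := by gcongr; exact sqrt_le_one.2 (by linarith)
      _ ≤ 1 := by norm_num
  · calc |η' - η''| * |(k : ℝ) / 2 * √δ| ≤ 2 * (L * √δ) :=
          mul_le_mul (abs_le.2 ⟨by linarith, by linarith⟩) hθ (abs_nonneg _) zero_le_two
      _ = 2 * L * √δ := by ring
end

section
/- Fix constants c_1, c_2 > 0, and for ℓ ∈ ℕ_0^* and η' ∈ J̃_1, η'' ∈ J̃_2 with η' + η'' = η, set R_{ℓ,δ}(η',η'') = p_{ℓ,δ}(η',η'') + R_0(c_1 ℓ_* δ, (c_2+4) δ^{1/2}). Then there exist constants c_1', c_2' > 0, depending only on c_1, c_2 and independent of a, δ, ℓ, and the η-parameters, such that for every a ∈ ℝ, every ℓ ∈ ℕ_0^* with 0 ≤ ℓ ≤ (π/8) δ^{-1/2} − 1, and all η', η_0' ∈ J̃_1 and η'', η_0'' ∈ J̃_2 with η'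 + η'' = η_0' + η_0'' = η, one has 𝓔̃_a(η',η'') ∩ R_{ℓ,δ}(η_0',η_0'') ⊆ ℛ_{a δ^{1/2}} R(p_{ℓ,δ}(η',η''); c_1' ℓ_* δ, c_2' δ^{1/2}). -/
open Set Pointwise

/-!
Rotations preserve `normSq`, and the centres of the two rectangles differ only in the second
coordinate, by `O(δ^{1/2})`; hence a point `ξ` of the curve whose rotation lies in the
first rectangle satisfies `|ξ|² = |p(η', η'')|² + O(ℓ_* δ)`. On the ellipse,
`ξ = ((η' + η'') u, (η' - η'') v)` with `u² + v² = 1`, and `|ξ|² - |p|² = 4 η' η'' (u² - cos² θ)`;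
on the horizontal ray, `|ξ|² - |p|² = (ξ₁² - (η' + η'')²) + 4 η' η'' sin² θ` is a sum of
nonnegative terms. Either way `u² - cos² θ` and `v² - sin² θ` are `O(ℓ_* δ)`. Since `cos θ ≥ 1/2`
this bounds the first coordinate; for the second, `sin θ ≳ ℓ δ^{1/2}` gives
`|v - sin θ| = O(δ^{1/2})` when `ℓ ≥ 1/2`, and for smaller `ℓ` one takes a square root.
-/

open Real
open Complex (normSq normSq_apply normSq_eq_norm_sq)

lemma abs_sq_sub_sq_le {x a e : ℝ} (h : |x - a| ≤ e) : |x ^ 2 - a ^ 2| ≤ e * (e + 2 * |a|) := by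
  have hx : x ^ 2 - a ^ 2 = (x - a) * ((x - a) + 2 * a) := by ring
  rw [hx, abs_mul]
  gcongr
  · exact (abs_nonneg _).trans h
  · calc |x - a + 2 * a| ≤ |x - a| + |2 * a| := abs_add_le _ _
      _ ≤ e + 2 * |a| := by rw [abs_mul, abs_two]; linarith

lemma abs_sub_mul_add_eq {x y : ℝ} (hx : 0 ≤ x) (hy : 0 ≤ y) :
    |x - y| * (x + y) = |x ^ 2 - y ^ 2| := by
  rw [sq_sub_sq, abs_mul, abs_of_nonneg (add_nonneg hx hy), mul_comm]

lemma mem_rect_of_mem_rect {z p q : ℂ} {A B A' B' : ℝ} (h : z ∈ rect p A B)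
    (hre : |p.re - q.re| ≤ A') (him : |p.im - q.im| ≤ B') : z ∈ rect q (A + A') (B + B') := by
  obtain ⟨h₁, h₂⟩ := h
  constructor
  · calc |z.re - q.re| ≤ |z.re - p.re| + |p.re - q.re| := abs_sub_le _ _ _
      _ ≤ A + A' := add_le_add h₁ hre
  · calc |z.im - q.im| ≤ |z.im - p.im| + |p.im - q.im| := abs_sub_le _ _ _
      _ ≤ B + B' := add_le_add h₂ him

lemma abs_normSq_sub_normSq_le_of_mem_rect {z p : ℂ} {A B : ℝ} (h : z ∈ rect p A B) :
    |normSq z - normSq p| ≤ A * (A + 2 * |p.re|) + B * (B + 2 * |p.im|) := by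
  have hsplit : normSq z - normSq p = (z.re ^ 2 - p.re ^ 2) + (z.im ^ 2 - p.im ^ 2) := by
    simp only [normSq_apply]; ring
  rw [hsplit]
  exact (abs_add_le _ _).trans (add_le_add (abs_sq_sub_sq_le h.1) (abs_sq_sub_sq_le h.2))

lemma normSq_rot (σ : ℝ) (z : ℂ) : normSq (rot σ z) = normSq z := by
  simp [rot, normSq_eq_norm_sq, Complex.norm_exp_ofReal_mul_I]

lemma half_le_cos {θ : ℝ} (h₀ : 0 ≤ θ) (h₁ : θ ≤ π / 3) : 1 / 2 ≤ cos θ := by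
  rw [← cos_pi_div_three]
  exact cos_le_cos_of_nonneg_of_le_pi h₀ (by linarith [pi_pos]) h₁

lemma abs_sub_sin_le {δ ℓ x K : ℝ} (hδ : 0 < δ) (hℓ : 0 ≤ ℓ) (hθ : ℓ * √δ ≤ π / 2)
    (hx : 0 ≤ x) (hK : 0 ≤ K) (h : |x ^ 2 - sin (ℓ * √δ) ^ 2| ≤ K * max ℓ (1 / 2) * δ) :
    |x - sin (ℓ * √δ)| ≤ 2 * (K + 1) * √δ := by
  set s := √δ with hs_def
  have hs : 0 < s := sqrt_pos.mpr hδ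
  have hδs : δ = s ^ 2 := (sq_sqrt hδ.le).symm
  rw [hδs] at h
  have hθ₀ : 0 ≤ ℓ * s := mul_nonneg hℓ hs.le
  set σ := sin (ℓ * s)
  have hσ : 0 ≤ σ := sin_nonneg_of_nonneg_of_le_pi hθ₀ (by linarith [pi_pos])
  have hfac := abs_sub_mul_add_eq hx hσ
  rcases le_or_gt ℓ (1 / 2) with hℓ₁ | hℓ₁
  · rw [max_eq_right hℓ₁] at h
    have hsq : (x - σ) ^ 2 ≤ K / 2 * s ^ 2 := by
      calc (x - σ) ^ 2 = |x - σ| * |x - σ| := by rw [← sq_abs, sq]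
        _ ≤ |x - σ| * (x + σ) := by
            gcongr
            exact abs_sub_le_of_nonneg_of_le hx (le_add_of_nonneg_right hσ) hσ
              (le_add_of_nonneg_left hx)
        _ ≤ K / 2 * s ^ 2 := by rw [hfac]; linarith
    apply abs_le_of_sq_le_sq _ (by positivity)
    nlinarith [sq_nonneg s]
  · rw [max_eq_left hℓ₁.le] at h
    have hσ_ge : 2 / π * (ℓ * s) ≤ σ := mul_le_sin hθ₀ hθ
    have hσ_pos : 0 < 2 / π * (ℓ * s) := by positivity
    have hmul : |x - σ| * (2 / π * (ℓ * s)) ≤ (π / 2 * K * s) * (2 / π * (ℓ * s)) := by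
      calc |x - σ| * (2 / π * (ℓ * s)) ≤ |x - σ| * (x + σ) := by gcongr; linarith
        _ ≤ K * ℓ * s ^ 2 := by rw [hfac]; exact h
        _ = (π / 2 * K * s) * (2 / π * (ℓ * s)) := by field_simp
    calc |x - σ| ≤ π / 2 * K * s := le_of_mul_le_mul_right hmul hσ_pos
      _ ≤ 2 * (K + 1) * s := by nlinarith [pi_lt_four, mul_nonneg hK hs.le]

lemma exists_param_of_mem_curveE {η' η'' : ℝ} {ξ : ℂ} (h : ξ ∈ curveE η' η'') :
    ∃ u v : ℝ, 0 ≤ u ∧ 0 ≤ v ∧ u ^ 2 + v ^ 2 = 1 ∧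
      ξ.re = (η' + η'') * u ∧ ξ.im = (η' - η'') * v := by
  unfold curveE at h
  split_ifs at h with he
  · obtain ⟨him, h₁, hle⟩ := h
    have hη : 0 < η' + η'' := by linarith
    have hu : 0 ≤ ξ.re / (η' + η'') := div_nonneg (by linarith) hη.le
    have hu₁ : ξ.re / (η' + η'') ≤ 1 := (div_le_one hη).mpr hle
    refine ⟨ξ.re / (η' + η''), √(1 - (ξ.re / (η' + η'')) ^ 2), hu, sqrt_nonneg _, ?_,
      by field_simp, by rw [he, sub_self, zero_mul, him]⟩
    rw [sq_sqrt (by nlinarith)]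
    ring
  · obtain ⟨hell, h₁, hle, hpos, hneg⟩ := h
    have hη : 0 < η' + η'' := by linarith
    have hd : η' - η'' ≠ 0 := sub_ne_zero.mpr he
    refine ⟨ξ.re / (η' + η''), ξ.im / (η' - η''), div_nonneg (by linarith) hη.le, ?_,
      by rw [div_pow, div_pow]; exact hell, by field_simp, by field_simp⟩
    rcases lt_or_gt_of_ne he with hlt | hgt
    · exact div_nonneg_of_nonpos (hneg hlt.le) (by linarith)
    · exact div_nonneg (hpos hgt.le) (by linarith)

lemma mem_rect_of_ellipse_param {δ ℓ η' η'' u v E r : ℝ} {ξ : ℂ}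
    (hη' : η' ∈ Icc (3 / 4 : ℝ) (5 / 2)) (hη'' : η'' ∈ Icc (3 / 4 : ℝ) (5 / 2))
    (hθ₀ : 0 ≤ ℓ * √δ) (hθ : ℓ * √δ ≤ π / 3)
    (hu : 0 ≤ u) (hv : 0 ≤ v) (huv : u ^ 2 + v ^ 2 = 1)
    (hre : ξ.re = (η' + η'') * u) (him : ξ.im = (η' - η'') * v)
    (hE : |normSq ξ - normSq (pPt δ ℓ η' η'')| ≤ E)
    (hr : ∀ x, 0 ≤ x → |x ^ 2 - sin (ℓ * √δ) ^ 2| ≤ E / 2 → |x - sin (ℓ * √δ)| ≤ r) :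
    ξ ∈ rect (pPt δ ℓ η' η'') (5 * E) (2 * r) := by
  obtain ⟨h₁, h₂⟩ := hη'
  obtain ⟨h₃, h₄⟩ := hη''
  set θ := ℓ * √δ with hθ_def
  have hc := half_le_cos hθ₀ hθ
  have hpyth := sin_sq_add_cos_sq θ
  have hdiff : normSq ξ - normSq (pPt δ ℓ η' η'') = 4 * η' * η'' * (u ^ 2 - cos θ ^ 2) := by
    simp only [normSq_apply, pPt, ← hθ_def, hre, him]
    linear_combination (η' - η'') ^ 2 * huv - (η' - η'') ^ 2 * hpyth
  have hu₂ : |u ^ 2 - cos θ ^ 2| ≤ E / 2 := by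
    have hdet : 2 ≤ 4 * η' * η'' := by nlinarith
    rw [hdiff, abs_mul, abs_of_pos (by linarith)] at hE
    nlinarith [abs_nonneg (u ^ 2 - cos θ ^ 2)]
  have hv₂ : |v ^ 2 - sin θ ^ 2| ≤ E / 2 := by
    rw [show v ^ 2 - sin θ ^ 2 = -(u ^ 2 - cos θ ^ 2) by linear_combination huv - hpyth, abs_neg]
    exact hu₂
  constructor
  · have hu_c : |u - cos θ| ≤ E := by
      have hfac := abs_sub_mul_add_eq hu (by linarith : 0 ≤ cos θ)
      nlinarith [abs_nonneg (u - cos θ)]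
    calc |ξ.re - (pPt δ ℓ η' η'').re| = (η' + η'') * |u - cos θ| := by
          have hη : 0 < η' + η'' := by linarith
          simp only [pPt, ← hθ_def, hre, ← mul_sub, abs_mul, abs_of_pos hη]
      _ ≤ 5 * E := by nlinarith [abs_nonneg (u - cos θ)]
  · calc |ξ.im - (pPt δ ℓ η' η'').im| = |η' - η''| * |v - sin θ| := by
          simp only [pPt, ← hθ_def, him, ← mul_sub, abs_mul]
      _ ≤ 2 * r := mul_le_mul (abs_le.mpr ⟨by linarith, by linarith⟩) (hr v hv hv₂)
          (abs_nonneg _) zero_le_two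

lemma mem_rect_of_im_eq_zero {δ ℓ η' η'' E r : ℝ} {ξ : ℂ}
    (hη' : η' ∈ Icc (3 / 4 : ℝ) (5 / 2)) (hη'' : η'' ∈ Icc (3 / 4 : ℝ) (5 / 2))
    (hθ₀ : 0 ≤ ℓ * √δ) (hθ : ℓ * √δ ≤ π / 3)
    (hre : η' + η'' ≤ ξ.re) (him : ξ.im = 0)
    (hE : |normSq ξ - normSq (pPt δ ℓ η' η'')| ≤ E)
    (hr : ∀ x, 0 ≤ x → |x ^ 2 - sin (ℓ * √δ) ^ 2| ≤ E / 2 → |x - sin (ℓ * √δ)| ≤ r) :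
    ξ ∈ rect (pPt δ ℓ η' η'') (5 * E) (2 * r) := by
  obtain ⟨h₁, h₂⟩ := hη'
  obtain ⟨h₃, h₄⟩ := hη''
  set θ := ℓ * √δ with hθ_def
  have hc := half_le_cos hθ₀ hθ
  have hσ : 0 ≤ sin θ := sin_nonneg_of_nonneg_of_le_pi hθ₀ (by linarith [pi_pos])
  have hpyth := sin_sq_add_cos_sq θ
  have hdiff : normSq ξ - normSq (pPt δ ℓ η' η'') =
      (ξ.re ^ 2 - (η' + η'') ^ 2) + 4 * η' * η'' * sin θ ^ 2 := by
    simp only [normSq_apply, pPt, ← hθ_def, him]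
    linear_combination (-(η' + η'') ^ 2) * hpyth
  have hre₂ : 0 ≤ ξ.re ^ 2 - (η' + η'') ^ 2 := by nlinarith
  have hsum : (ξ.re ^ 2 - (η' + η'') ^ 2) + 4 * η' * η'' * sin θ ^ 2 ≤ E :=
    hdiff ▸ (le_abs_self _).trans hE
  have hre_le : ξ.re ^ 2 - (η' + η'') ^ 2 ≤ E := by
    nlinarith [mul_nonneg (by positivity : (0 : ℝ) ≤ 4 * η' * η'') (sq_nonneg (sin θ))]
  have hσ₂ : sin θ ^ 2 ≤ E / 2 := by
    have hdet : 2 ≤ 4 * η' * η'' := by nlinarith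
    nlinarith [mul_nonneg (sub_nonneg.2 hdet) (sq_nonneg (sin θ))]
  constructor
  · have hcos : 1 - cos θ ≤ E / 2 := by nlinarith [cos_le_one θ]
    have hshift : ξ.re - (η' + η'') ≤ E := by
      nlinarith [mul_nonneg (sub_nonneg.2 hre) (by linarith : (0 : ℝ) ≤ ξ.re + (η' + η'') - 1)]
    have hpos : 0 ≤ ξ.re - (η' + η'') * cos θ := by nlinarith [cos_le_one θ]
    simp only [pPt, ← hθ_def]
    rw [abs_of_nonneg hpos]
    nlinarith
  · have hσr : sin θ ≤ r := by
      simpa [abs_of_nonneg hσ] using hr 0 le_rfl (by simpa using hσ₂)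
    calc |ξ.im - (pPt δ ℓ η' η'').im| = |η' - η''| * sin θ := by
          simp only [pPt, ← hθ_def, him, zero_sub, abs_neg, abs_mul, abs_of_nonneg hσ]
      _ ≤ 2 * r := mul_le_mul (abs_le.mpr ⟨by linarith, by linarith⟩) hσr hσ zero_le_two

lemma mem_rect_of_mem_tildeE {δ ℓ η' η'' E r : ℝ} {ξ : ℂ} (hξ : ξ ∈ tildeE η' η'')
    (hη' : η' ∈ Icc (3 / 4 : ℝ) (5 / 2)) (hη'' : η'' ∈ Icc (3 / 4 : ℝ) (5 / 2))
    (hθ₀ : 0 ≤ ℓ * √δ) (hθ : ℓ * √δ ≤ π / 3)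
    (hE : |normSq ξ - normSq (pPt δ ℓ η' η'')| ≤ E)
    (hr : ∀ x, 0 ≤ x → |x ^ 2 - sin (ℓ * √δ) ^ 2| ≤ E / 2 → |x - sin (ℓ * √δ)| ≤ r) :
    ξ ∈ rect (pPt δ ℓ η' η'') (5 * E) (2 * r) := by
  rcases hξ with hξ | ⟨him, hre, -⟩
  · obtain ⟨u, v, hu, hv, huv, hre, him⟩ := exists_param_of_mem_curveE hξ
    exact mem_rect_of_ellipse_param hη' hη'' hθ₀ hθ hu hv huv hre him hE hr
  · exact mem_rect_of_im_eq_zero hη' hη'' hθ₀ hθ hre him hE hr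

lemma abs_im_pPt_sub_im_pPt_le {δ ℓ η' η'' η₀' η₀'' : ℝ} (hℓ : 0 ≤ ℓ) (hθ : ℓ * √δ ≤ 1 / 2)
    (hsum : η' + η'' = η₀' + η₀'') (hclose : |η' - η₀'| ≤ 2 * √δ) :
    |(pPt δ ℓ η₀' η₀'').im - (pPt δ ℓ η' η'').im| ≤ 2 * √δ := by
  have hθ₀ : 0 ≤ ℓ * √δ := mul_nonneg hℓ (sqrt_nonneg δ)
  have hσ₀ : 0 ≤ sin (ℓ * √δ) :=
    sin_nonneg_of_nonneg_of_le_pi hθ₀ (by linarith [pi_gt_three])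
  have hσ : sin (ℓ * √δ) ≤ 1 / 2 := (sin_le hθ₀).trans hθ
  have h : (pPt δ ℓ η₀' η₀'').im - (pPt δ ℓ η' η'').im = 2 * (η₀' - η') * sin (ℓ * √δ) := by
    simp only [pPt]
    linear_combination sin (ℓ * √δ) * hsum
  rw [h, abs_mul, abs_mul, abs_of_nonneg hσ₀, abs_sub_comm, abs_two]
  nlinarith [abs_nonneg (η' - η₀')]

lemma abs_normSq_sub_normSq_pPt_le {c₁ c₂ δ ℓ η' η'' η₀' η₀'' : ℝ} {w : ℂ}
    (hc₁ : 0 ≤ c₁) (hc₂ : 0 ≤ c₂) (hδ : 0 < δ) (hδ₁ : δ ≤ 1) (hℓ : 0 ≤ ℓ) (hθ : ℓ * √δ ≤ 1 / 2)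
    (hη : |η' + η''| ≤ 5) (hd : |η' - η''| ≤ 2)
    (hsum : η' + η'' = η₀' + η₀'') (hclose : |η' - η₀'| ≤ 2 * √δ)
    (hw : w ∈ rect (pPt δ ℓ η₀' η₀'') (c₁ * max ℓ (1 / 2) * δ) ((c₂ + 4) * √δ)) :
    |normSq w - normSq (pPt δ ℓ η' η'')| ≤ 2 * (c₁ + c₂ + 10) ^ 2 * max ℓ (1 / 2) * δ := by
  set s := √δ with hs_def
  set L := max ℓ (1 / 2) with hL_def
  have hs : 0 < s := sqrt_pos.mpr hδ
  have hs₁ : s ≤ 1 := sqrt_le_one.mpr hδ₁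
  have hδs : δ = s ^ 2 := (sq_sqrt hδ.le).symm
  have hℓL : ℓ ≤ L := le_max_left _ _
  have hL : 1 / 2 ≤ L := le_max_right _ _
  have hLs : L * s ≤ 1 / 2 := by
    rcases max_cases ℓ (1 / 2) with ⟨h, -⟩ | ⟨h, -⟩ <;> rw [hL_def, h] <;> linarith
  set σ := sin (ℓ * s) with hσ_def
  have hσ₀ : 0 ≤ σ :=
    sin_nonneg_of_nonneg_of_le_pi (mul_nonneg hℓ hs.le) (by linarith [pi_gt_three])
  have hσ : σ ≤ ℓ * s := sin_le (mul_nonneg hℓ hs.le)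
  have hre : |(pPt δ ℓ η₀' η₀'').re - (pPt δ ℓ η' η'').re| ≤ 0 := by simp [pPt, hsum]
  have hp_re : |(pPt δ ℓ η' η'').re| ≤ 5 := by
    simp only [pPt, abs_mul]
    nlinarith [abs_cos_le_one (ℓ * s), abs_nonneg (η' + η''), abs_nonneg (cos (ℓ * s))]
  have hp_im : |(pPt δ ℓ η' η'').im| ≤ 2 * (L * s) := by
    simp only [pPt, ← hs_def, ← hσ_def, abs_mul, abs_of_nonneg hσ₀]
    nlinarith [mul_le_mul_of_nonneg_right hℓL hs.le, abs_nonneg (η' - η'')]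
  calc |normSq w - normSq (pPt δ ℓ η' η'')|
      ≤ (c₁ * L * δ + 0) * (c₁ * L * δ + 0 + 2 * |(pPt δ ℓ η' η'').re|)
        + ((c₂ + 4) * s + 2 * s) * ((c₂ + 4) * s + 2 * s + 2 * |(pPt δ ℓ η' η'').im|) :=
        abs_normSq_sub_normSq_le_of_mem_rect
          (mem_rect_of_mem_rect hw hre (abs_im_pPt_sub_im_pPt_le hℓ hθ hsum hclose))
    _ ≤ (c₁ * L * δ) * (c₁ + 2 * 5)
        + ((c₂ + 6) * s) * ((c₂ + 6) * (2 * (L * s)) + 2 * (2 * (L * s))) := by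
        have hc₁L : c₁ * L * δ ≤ c₁ := by
          have hLδ : L * δ ≤ 1 := by rw [hδs]; nlinarith
          nlinarith [mul_le_mul_of_nonneg_left hLδ hc₁]
        have hs_le : (c₂ + 6) * s ≤ (c₂ + 6) * (2 * (L * s)) :=
          mul_le_mul_of_nonneg_left (by nlinarith) (by linarith)
        rw [add_zero]
        gcongr <;> linarith
    _ = L * δ * (c₁ * (c₁ + 10) + (c₂ + 6) * (2 * c₂ + 16)) := by rw [hδs]; ring
    _ ≤ 2 * (c₁ + c₂ + 10) ^ 2 * L * δ := by
        rw [mul_comm (L * δ), mul_assoc _ L]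
        gcongr
        nlinarith

theorem statement13 :
    ∀ c₁ c₂ : ℝ, 0 < c₁ → 0 < c₂ →
    ∃ c₁' c₂' : ℝ, 0 < c₁' ∧ 0 < c₂' ∧
      ∀ δ : ℝ, 0 < δ → δ < 1 / 1000000 →
      ∀ α₁ β₁ α₂ β₂ : ℝ,
        1 ≤ α₁ → α₁ ≤ β₁ → β₁ ≤ 2 → β₁ - α₁ ≤ Real.sqrt δ →
        1 ≤ α₂ → α₂ ≤ β₂ → β₂ ≤ 2 → β₂ - α₂ ≤ Real.sqrt δ →
      ∀ a : ℝ,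
      ∀ k : ℕ, (k : ℝ) / 2 ≤ Real.pi / 8 * (Real.sqrt δ)⁻¹ - 1 →
      ∀ η' ∈ Icc (α₁ - δ) (β₁ + δ), ∀ η₀' ∈ Icc (α₁ - δ) (β₁ + δ),
      ∀ η'' ∈ Icc (α₂ - δ) (β₂ + δ), ∀ η₀'' ∈ Icc (α₂ - δ) (β₂ + δ),
        η' + η'' = η₀' + η₀'' →
        (rot (a * Real.sqrt δ) '' tildeE η' η'') ∩
            rect (pPt δ ((k : ℝ) / 2) η₀' η₀'')
              (c₁ * max ((k : ℝ) / 2) (1 / 2) * δ) ((c₂ + 4) * Real.sqrt δ)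
          ⊆ rot (a * Real.sqrt δ) ''
              rect (pPt δ ((k : ℝ) / 2) η' η'')
                (c₁' * max ((k : ℝ) / 2) (1 / 2) * δ) (c₂' * Real.sqrt δ) := by
  intro c₁ c₂ hc₁ hc₂
  refine ⟨10 * (c₁ + c₂ + 10) ^ 2, 4 * ((c₁ + c₂ + 10) ^ 2 + 1), by positivity, by positivity, ?_⟩
  intro δ hδ hδ₁ α₁ β₁ α₂ β₂ hα₁ _ hβ₁ hJ₁ hα₂ _ hβ₂ _ a k hk η' hη' η₀' hη₀' η'' hη'' η₀'' _ hsum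
  rintro _ ⟨⟨ξ, hξ, rfl⟩, hw⟩
  refine ⟨ξ, ?_, rfl⟩
  have hs : 0 < √δ := sqrt_pos.mpr hδ
  have hs_half : √δ < 1 / 2 := (sqrt_lt' one_half_pos).mpr (by linarith)
  have hδs : δ = √δ ^ 2 := (sq_sqrt hδ.le).symm
  have hθ : (k : ℝ) / 2 * √δ ≤ 1 / 2 :=
    calc (k : ℝ) / 2 * √δ ≤ (π / 8 * (√δ)⁻¹ - 1) * √δ := mul_le_mul_of_nonneg_right hk hs.le
      _ = π / 8 - √δ := by field_simp
      _ ≤ 1 / 2 := by linarith [pi_lt_four]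
  have hclose : |η' - η₀'| ≤ 2 * √δ := by
    have hδ_le : 2 * δ ≤ √δ := by nlinarith
    exact abs_le.mpr ⟨by linarith [hη'.1, hη₀'.2], by linarith [hη'.2, hη₀'.1]⟩
  have hnorm := abs_normSq_sub_normSq_pPt_le hc₁.le hc₂.le hδ (by linarith) (by positivity) hθ
    (abs_le.mpr ⟨by linarith [hη'.1, hη''.1], by linarith [hη'.2, hη''.2]⟩)
    (abs_le.mpr ⟨by linarith [hη'.1, hη''.2], by linarith [hη'.2, hη''.1]⟩) hsum hclose hw
  rw [normSq_rot] at hnorm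
  have hrect := mem_rect_of_mem_tildeE hξ ⟨by linarith [hη'.1], by linarith [hη'.2]⟩
    ⟨by linarith [hη''.1], by linarith [hη''.2]⟩ (by positivity) (by linarith [pi_gt_three]) hnorm
    fun x hx h ↦ abs_sub_sin_le (K := (c₁ + c₂ + 10) ^ 2) hδ (by positivity)
      (by linarith [pi_gt_three]) hx (by positivity) (by linarith)
  convert hrect using 2 <;> ring
end
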